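/- arXiv:2304.05602 — 7 statements merged into one kernel-verified Lean document; each statement's English description precedes it below -/
import Mathlib

section
/- Let H = (H_p)_{p in G} be a G-cograded Hopf coquasigroup and let R = (R_p) with R_p = H_p[y_p; τ_p, δ_p] be a group-cograded Hopf coquasigroup-Ore extension of H whose comultiplication satisfies Δ_{p,q}(y_{pq}) = y_p ⊗ r²_q + r¹_p ⊗ y_q for families of elements r¹_p, r²_p in H_p. Then for every q in G one has S_{q⁻¹}(r¹_{q⁻¹})r¹_q = r¹_q S_{q⁻¹}(r¹_{q⁻¹}) = 1_q and r²_q S_{q⁻¹}(r²_{q⁻¹}) = S_{q⁻¹}(r²_{q⁻¹})r²_q = 1_q; in particular each r¹_q and r²_q is invertible in H_q with inverse S_{q⁻¹}(r¹_{q⁻¹}) and S_{q⁻¹}(r²_{q⁻¹}) respectively. -/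
open scoped TensorProduct

section Preliminaries

variable (k : Type*) [Field k] {G : Type*} [Group G]

/-- Transport along an equality of group indices, as a `k`-linear map. -/
def lcast {H : G → Type*} [∀ p, AddCommMonoid (H p)] [∀ p, Module k (H p)]
    {p q : G} (e : p = q) : H p →ₗ[k] H q where
  toFun h := e ▸ h
  map_add' := by subst e; intros; rfl
  map_smul' := by subst e; intros; rfl

/-- A `G`-cograded Hopf coquasigroup over the field `k`. -/
structure GCHCQG (H : G → Type*) [∀ p, Ring (H p)] [∀ p, Algebra k (H p)] where
  /-- the comultiplication, a family of algebra maps `Δ_{p,q} : H_{pq} → H_p ⊗ H_q` -/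
  Δ : ∀ p q : G, H (p * q) →ₐ[k] (H p ⊗[k] H q)
  /-- the counit -/
  ε : H 1 →ₐ[k] k
  /-- the antipode, a family of `k`-linear anti-homomorphisms `S_p : H_p → H_{p⁻¹}` -/
  S : ∀ p : G, H p →ₗ[k] H p⁻¹
  S_one : ∀ p : G, S p (1 : H p) = 1
  S_mul : ∀ (p : G) (a b : H p), S p (a * b) = S p b * S p a
  /-- `(ε ⊗ id)Δ_{1,p} = id` -/
  counit_left : ∀ (p : G) (h : H (1 * p)),
    TensorProduct.lid k (H p)
      (TensorProduct.map ε.toLinearMap LinearMap.id (Δ 1 p h))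
      = lcast k (one_mul p) h
  /-- `(id ⊗ ε)Δ_{p,1} = id` -/
  counit_right : ∀ (p : G) (h : H (p * 1)),
    TensorProduct.rid k (H p)
      (TensorProduct.map LinearMap.id ε.toLinearMap (Δ p 1 h))
      = lcast k (mul_one p) h
  /-- `S_{q⁻¹}(h_(1,q⁻¹))h_(21,q) ⊗ h_(22,p) = 1_q ⊗ h` -/
  antipode_1 : ∀ (p q : G) (h : H (q⁻¹ * (q * p))),
    TensorProduct.map (LinearMap.mul' k (H q)) LinearMap.id
      (TensorProduct.map
        (TensorProduct.map ((lcast k (inv_inv q)).comp (S q⁻¹)) LinearMap.id)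
        LinearMap.id
        ((TensorProduct.assoc k (H q⁻¹) (H q) (H p)).symm
          (TensorProduct.map LinearMap.id (Δ q p).toLinearMap
            (Δ q⁻¹ (q * p) h))))
      = (1 : H q) ⊗ₜ[k] lcast k (inv_mul_cancel_left q p) h
  /-- `h_(1,q)S_{q⁻¹}(h_(21,q⁻¹)) ⊗ h_(22,p) = 1_q ⊗ h` -/
  antipode_2 : ∀ (p q : G) (h : H (q * (q⁻¹ * p))),
    TensorProduct.map (LinearMap.mul' k (H q)) LinearMap.id
      (TensorProduct.map
        (TensorProduct.map LinearMap.id ((lcast k (inv_inv q)).comp (S q⁻¹)))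
        LinearMap.id
        ((TensorProduct.assoc k (H q) (H q⁻¹) (H p)).symm
          (TensorProduct.map LinearMap.id (Δ q⁻¹ p).toLinearMap
            (Δ q (q⁻¹ * p) h))))
      = (1 : H q) ⊗ₜ[k] lcast k (mul_inv_cancel_left q p) h
  /-- `h_(11,p) ⊗ h_(12,q)S_{q⁻¹}(h_(2,q⁻¹)) = h ⊗ 1_q` -/
  antipode_3 : ∀ (p q : G) (h : H ((p * q) * q⁻¹)),
    TensorProduct.map LinearMap.id (LinearMap.mul' k (H q))
      (TensorProduct.map LinearMap.id
        (TensorProduct.map LinearMap.id ((lcast k (inv_inv q)).comp (S q⁻¹)))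
        ((TensorProduct.assoc k (H p) (H q) (H q⁻¹))
          (TensorProduct.map (Δ p q).toLinearMap LinearMap.id
            (Δ (p * q) q⁻¹ h))))
      = lcast k (mul_inv_cancel_right p q) h ⊗ₜ[k] (1 : H q)
  /-- `h_(11,p) ⊗ S_{q⁻¹}(h_(12,q⁻¹))h_(2,q) = h ⊗ 1_q` -/
  antipode_4 : ∀ (p q : G) (h : H ((p * q⁻¹) * q)),
    TensorProduct.map LinearMap.id (LinearMap.mul' k (H q))
      (TensorProduct.map LinearMap.id
        (TensorProduct.map ((lcast k (inv_inv q)).comp (S q⁻¹)) LinearMap.id)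
        ((TensorProduct.assoc k (H p) (H q⁻¹) (H q))
          (TensorProduct.map (Δ p q⁻¹).toLinearMap LinearMap.id
            (Δ (p * q⁻¹) q h))))
      = lcast k (inv_mul_cancel_right p q) h ⊗ₜ[k] (1 : H q)

/-- A realization of the Ore extension `A[y; τ, δ]` : a `k`-algebra `R` containing `A`
(via `ι`), free as a left `A`-module with basis `{yⁿ}`, with `y·a = τ(a)y + δ(a)`. -/
structure OreData (A R : Type*) [Ring A] [Algebra k A] [Ring R] [Algebra k R]
    (τ : A →ₐ[k] A) (δ : A →ₗ[k] A) where
  ι : A →ₐ[k] R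
  y : R
  rel : ∀ a : A, y * ι a = ι (τ a) * y + ι (δ a)
  free : ∀ f : ℕ →₀ A, (f.sum fun n a => ι a * y ^ n) = 0 → f = 0
  span : ∀ x : R, ∃ f : ℕ →₀ A, x = f.sum fun n a => ι a * y ^ n

/-- A group-cograded Hopf coquasigroup-Ore extension of `H` : the family
`R_p = H_p[y_p; τ_p, δ_p]` carrying a `G`-cograded Hopf coquasigroup structure
whose structure maps restrict on the subalgebras `H_p` to those of `H`. -/
structure GCHCQGOreExt {H : G → Type*} [∀ p, Ring (H p)] [∀ p, Algebra k (H p)]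
    (HH : GCHCQG k H)
    (R : G → Type*) [∀ p, Ring (R p)] [∀ p, Algebra k (R p)]
    (τ : ∀ p : G, H p →ₐ[k] H p) (δ : ∀ p : G, H p →ₗ[k] H p) where
  RR : GCHCQG k R
  ore : ∀ p : G, OreData k (H p) (R p) (τ p) (δ p)
  deriv : ∀ (p : G) (a b : H p), δ p (a * b) = δ p a * b + τ p a * δ p b
  compat_Δ : ∀ (p q : G) (h : H (p * q)),
    RR.Δ p q ((ore (p * q)).ι h)
      = TensorProduct.map ((ore p).ι).toLinearMap ((ore q).ι).toLinearMap (HH.Δ p q h)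
  compat_ε : ∀ h : H (1 : G), RR.ε ((ore 1).ι h) = HH.ε h
  compat_S : ∀ (p : G) (h : H p), RR.S p ((ore p).ι h) = (ore p⁻¹).ι (HH.S p h)

/-- A Hopf coquasigroup over the field `k`. -/
structure HopfCoquasigroup (H : Type*) [Ring H] [Algebra k H] where
  Δ : H →ₐ[k] H ⊗[k] H
  ε : H →ₐ[k] k
  S : H →ₗ[k] H
  counit_left : ∀ h : H,
    TensorProduct.lid k H (TensorProduct.map ε.toLinearMap LinearMap.id (Δ h)) = h
  counit_right : ∀ h : H,
    TensorProduct.rid k H (TensorProduct.map LinearMap.id ε.toLinearMap (Δ h)) = h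
  antipode_1 : ∀ h : H,
    TensorProduct.map (LinearMap.mul' k H) LinearMap.id
      (TensorProduct.map (TensorProduct.map S LinearMap.id) LinearMap.id
        ((TensorProduct.assoc k H H H).symm
          (TensorProduct.map LinearMap.id Δ.toLinearMap (Δ h))))
      = (1 : H) ⊗ₜ[k] h
  antipode_2 : ∀ h : H,
    TensorProduct.map (LinearMap.mul' k H) LinearMap.id
      (TensorProduct.map (TensorProduct.map LinearMap.id S) LinearMap.id
        ((TensorProduct.assoc k H H H).symm
          (TensorProduct.map LinearMap.id Δ.toLinearMap (Δ h))))
      = (1 : H) ⊗ₜ[k] h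
  antipode_3 : ∀ h : H,
    TensorProduct.map LinearMap.id (LinearMap.mul' k H)
      (TensorProduct.map LinearMap.id (TensorProduct.map S LinearMap.id)
        ((TensorProduct.assoc k H H H)
          (TensorProduct.map Δ.toLinearMap LinearMap.id (Δ h))))
      = h ⊗ₜ[k] (1 : H)
  antipode_4 : ∀ h : H,
    TensorProduct.map LinearMap.id (LinearMap.mul' k H)
      (TensorProduct.map LinearMap.id (TensorProduct.map LinearMap.id S)
        ((TensorProduct.assoc k H H H)
          (TensorProduct.map Δ.toLinearMap LinearMap.id (Δ h))))
      = h ⊗ₜ[k] (1 : H)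

end Preliminaries

section OreAux

variable {k : Type*} [Field k] {A R : Type*} [Ring A] [Algebra k A] [Ring R] [Algebra k R]
  {τ : A →ₐ[k] A} {δ : A →ₗ[k] A}

namespace OreData

variable (o : OreData k A R τ δ)

lemma sum_injective {f g : ℕ →₀ A} (h : (f.sum fun n a => o.ι a * o.y ^ n) = (g.sum fun n a => o.ι a * o.y ^ n)) :
    f = g := by
  have hfree := o.free (f - g) ?_
  · exact sub_eq_zero.mp hfree
  · rw [Finsupp.sum_sub_index (fun n a b => by rw [map_sub, sub_mul]), h, sub_self]

noncomputable def repr (x : R) : ℕ →₀ A := (o.span x).choose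

lemma repr_spec (x : R) : x = (o.repr x).sum fun n a => o.ι a * o.y ^ n := (o.span x).choose_spec

lemma repr_unique {x : R} {f : ℕ →₀ A} (h : x = f.sum fun n a => o.ι a * o.y ^ n) :
    o.repr x = f := o.sum_injective (by rw [← o.repr_spec, ← h])

lemma repr_add (x y : R) : o.repr (x + y) = o.repr x + o.repr y := by
  refine o.repr_unique ?_
  rw [Finsupp.sum_add_index' (fun n => by rw [map_zero, zero_mul]) (fun n a b => by rw [map_add, add_mul]),
    ← o.repr_spec, ← o.repr_spec]

lemma repr_smul (c : k) (x : R) : o.repr (c • x) = c • o.repr x := by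
  refine o.repr_unique ?_
  rw [Finsupp.sum_smul_index' (fun n => by rw [map_zero, zero_mul])]
  have : ((o.repr x).sum fun n a => o.ι (c • a) * o.y ^ n) = c • ((o.repr x).sum fun n a => o.ι a * o.y ^ n) := by
    rw [Finsupp.smul_sum]
    exact Finsupp.sum_congr fun n _ => by rw [map_smul, smul_mul_assoc]
  rw [this, ← o.repr_spec]

noncomputable def coeff (n : ℕ) : R →ₗ[k] A where
  toFun x := o.repr x n
  map_add' x y := by simp only [o.repr_add, Finsupp.add_apply]
  map_smul' c x := by simp only [o.repr_smul, Finsupp.smul_apply, RingHom.id_apply, smul_eq_mul]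

lemma coeff_ι_mul_y_pow (n m : ℕ) (a : A) :
    o.coeff n (o.ι a * o.y ^ m) = if m = n then a else 0 := by
  have h : o.ι a * o.y ^ m = (Finsupp.single m a).sum fun n a => o.ι a * o.y ^ n := by
    rw [Finsupp.sum_single_index (by rw [map_zero, zero_mul])]
  show o.repr _ n = _
  rw [o.repr_unique h, Finsupp.single_apply]

@[simp] lemma coeff_zero_ι (a : A) : o.coeff 0 (o.ι a) = a := by
  have := o.coeff_ι_mul_y_pow 0 0 a
  simpa using this

@[simp] lemma coeff_one_ι (a : A) : o.coeff 1 (o.ι a) = 0 := by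
  have := o.coeff_ι_mul_y_pow 1 0 a
  simpa using this

@[simp] lemma coeff_zero_one : o.coeff 0 (1 : R) = 1 := by
  have := o.coeff_zero_ι (1 : A)
  simpa using this

@[simp] lemma coeff_one_one : o.coeff 1 (1 : R) = 0 := by
  have := o.coeff_one_ι (1 : A)
  simpa using this

@[simp] lemma coeff_one_y : o.coeff 1 o.y = 1 := by
  have := o.coeff_ι_mul_y_pow 1 1 (1 : A)
  simpa using this

@[simp] lemma coeff_zero_y : o.coeff 0 o.y = 0 := by
  have := o.coeff_ι_mul_y_pow 0 1 (1 : A)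
  simpa using this

@[simp] lemma coeff_one_ι_mul_y (a : A) : o.coeff 1 (o.ι a * o.y) = a := by
  have := o.coeff_ι_mul_y_pow 1 1 a
  simpa using this

@[simp] lemma coeff_zero_ι_mul_y (a : A) : o.coeff 0 (o.ι a * o.y) = 0 := by
  have := o.coeff_ι_mul_y_pow 0 1 a
  simpa using this

end OreData

end OreAux

set_option linter.unusedSectionVars false

section LcastAux

variable {k : Type*} [Field k] {G : Type*} [Group G]

@[simp] lemma lcast_rfl {H : G → Type*} [∀ p, AddCommMonoid (H p)] [∀ p, Module k (H p)]
    {p : G} (h : H p) : lcast k (rfl : p = p) h = h := rfl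

lemma lcast_ore_ι {H R : G → Type*} [∀ p, Ring (H p)] [∀ p, Algebra k (H p)]
    [∀ p, Ring (R p)] [∀ p, Algebra k (R p)]
    {τ : ∀ p : G, H p →ₐ[k] H p} {δ : ∀ p : G, H p →ₗ[k] H p}
    (ore : ∀ p : G, OreData k (H p) (R p) (τ p) (δ p)) {p q : G} (e : p = q) (a : H p) :
    lcast k (H := R) e ((ore p).ι a) = (ore q).ι (lcast k e a) := by subst e; rfl

lemma lcast_ore_y {H R : G → Type*} [∀ p, Ring (H p)] [∀ p, Algebra k (H p)]
    [∀ p, Ring (R p)] [∀ p, Algebra k (R p)]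
    {τ : ∀ p : G, H p →ₐ[k] H p} {δ : ∀ p : G, H p →ₗ[k] H p}
    (ore : ∀ p : G, OreData k (H p) (R p) (τ p) (δ p)) {p q : G} (e : p = q) :
    lcast k (H := R) e ((ore p).y) = (ore q).y := by subst e; rfl

end LcastAux

set_option maxHeartbeats 2000000 in
set_option synthInstance.maxHeartbeats 400000 in
/-- If `R = (H_p[y_p; τ_p, δ_p])` is a group-cograded Hopf
coquasigroup-Ore extension of `H` with `Δ_{p,q}(y_{pq}) = y_p ⊗ r²_q + r¹_p ⊗ y_q`,
then `S_{q⁻¹}(r¹_{q⁻¹})r¹_q = r¹_q S_{q⁻¹}(r¹_{q⁻¹}) = 1_q` and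
`r²_q S_{q⁻¹}(r²_{q⁻¹}) = S_{q⁻¹}(r²_{q⁻¹})r²_q = 1_q`; in particular `r¹_q`, `r²_q`
are invertible. -/
theorem statement4 (k : Type*) [Field k] {G : Type*} [Group G]
    (H : G → Type*) [∀ p, Ring (H p)] [∀ p, Algebra k (H p)]
    (HH : GCHCQG k H)
    (R : G → Type*) [∀ p, Ring (R p)] [∀ p, Algebra k (R p)]
    (τ : ∀ p : G, H p →ₐ[k] H p) (δ : ∀ p : G, H p →ₗ[k] H p)
    (ext : GCHCQGOreExt k HH R τ δ)
    (r1 r2 : ∀ p : G, H p)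
    (hy : ∀ p q : G,
      ext.RR.Δ p q ((ext.ore (p * q)).y)
        = (ext.ore p).y ⊗ₜ[k] (ext.ore q).ι (r2 q)
          + (ext.ore p).ι (r1 p) ⊗ₜ[k] (ext.ore q).y) :
    ∀ q : G,
      (lcast k (inv_inv q) (HH.S q⁻¹ (r1 q⁻¹)) * r1 q = 1) ∧
      (r1 q * lcast k (inv_inv q) (HH.S q⁻¹ (r1 q⁻¹)) = 1) ∧
      (r2 q * lcast k (inv_inv q) (HH.S q⁻¹ (r2 q⁻¹)) = 1) ∧
      (lcast k (inv_inv q) (HH.S q⁻¹ (r2 q⁻¹)) * r2 q = 1) ∧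
      IsUnit (r1 q) ∧ IsUnit (r2 q) := by
  intro q
  have h1 : lcast k (inv_inv q) (HH.S q⁻¹ (r1 q⁻¹)) * r1 q = 1 := by
    have E := ext.RR.antipode_1 1 q ((ext.ore (q⁻¹ * (q * 1))).y)
    obtain ⟨T, hT⟩ := TensorProduct.exists_finset (HH.Δ q 1 (r2 (q * 1)))
    rw [hy] at E
    simp only [map_add, TensorProduct.map_tmul, AlgHom.toLinearMap_apply,
      LinearMap.id_coe, id_eq, ext.compat_Δ, hy, hT, TensorProduct.tmul_sum, TensorProduct.tmul_add, TensorProduct.add_tmul,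
      TensorProduct.sum_tmul, map_sum, TensorProduct.assoc_symm_tmul,
      LinearMap.coe_comp, Function.comp_apply, ext.compat_S,
      lcast_ore_ι ext.ore, lcast_ore_y ext.ore, LinearMap.mul'_apply] at E
    have E2 := congrArg (⇑((TensorProduct.rid k (H q)).toLinearMap ∘ₗ
      TensorProduct.map ((ext.ore q).coeff 0) (HH.ε.toLinearMap ∘ₗ (ext.ore 1).coeff 1))) E
    simp only [map_add, map_sum, LinearMap.coe_comp, Function.comp_apply,
      TensorProduct.map_tmul, LinearEquiv.coe_coe, TensorProduct.rid_tmul,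
      OreData.coeff_one_ι, map_zero, zero_smul, Finset.sum_const_zero,
      OreData.coeff_one_y, map_one, one_smul, OreData.coeff_zero_one,
      ← map_mul, OreData.coeff_zero_ι, OreData.coeff_zero_ι_mul_y,
      smul_zero, zero_add, add_zero, AlgHom.toLinearMap_apply] at E2
    exact E2
  have h2 : r1 q * lcast k (inv_inv q) (HH.S q⁻¹ (r1 q⁻¹)) = 1 := by
    have E := ext.RR.antipode_2 1 q ((ext.ore (q * (q⁻¹ * 1))).y)
    obtain ⟨T, hT⟩ := TensorProduct.exists_finset (HH.Δ q⁻¹ 1 (r2 (q⁻¹ * 1)))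
    rw [hy] at E
    simp only [map_add, TensorProduct.map_tmul, AlgHom.toLinearMap_apply,
      LinearMap.id_coe, id_eq, ext.compat_Δ, hy, hT, TensorProduct.tmul_sum,
      TensorProduct.tmul_add, TensorProduct.add_tmul,
      TensorProduct.sum_tmul, map_sum, TensorProduct.assoc_symm_tmul,
      LinearMap.coe_comp, Function.comp_apply, ext.compat_S,
      lcast_ore_ι ext.ore, lcast_ore_y ext.ore, LinearMap.mul'_apply] at E
    have E2 := congrArg (⇑((TensorProduct.rid k (H q)).toLinearMap ∘ₗ
      TensorProduct.map ((ext.ore q).coeff 0) (HH.ε.toLinearMap ∘ₗ (ext.ore 1).coeff 1))) E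
    simp only [map_add, map_sum, LinearMap.coe_comp, Function.comp_apply,
      TensorProduct.map_tmul, LinearEquiv.coe_coe, TensorProduct.rid_tmul,
      OreData.coeff_one_ι, map_zero, zero_smul, Finset.sum_const_zero,
      OreData.coeff_one_y, map_one, one_smul, OreData.coeff_zero_one,
      ← map_mul, OreData.coeff_zero_ι, OreData.coeff_zero_ι_mul_y,
      smul_zero, zero_add, add_zero, AlgHom.toLinearMap_apply] at E2
    exact E2
  have h3 : r2 q * lcast k (inv_inv q) (HH.S q⁻¹ (r2 q⁻¹)) = 1 := by
    have E := ext.RR.antipode_3 1 q ((ext.ore ((1 * q) * q⁻¹)).y)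
    obtain ⟨T, hT⟩ := TensorProduct.exists_finset (HH.Δ 1 q (r1 (1 * q)))
    rw [hy] at E
    simp only [map_add, TensorProduct.map_tmul, AlgHom.toLinearMap_apply,
      LinearMap.id_coe, id_eq, ext.compat_Δ, hy, hT, TensorProduct.tmul_sum,
      TensorProduct.tmul_add, TensorProduct.add_tmul,
      TensorProduct.sum_tmul, map_sum, TensorProduct.assoc_tmul,
      LinearMap.coe_comp, Function.comp_apply, ext.compat_S,
      lcast_ore_ι ext.ore, lcast_ore_y ext.ore, LinearMap.mul'_apply] at E
    have E2 := congrArg (⇑((TensorProduct.lid k (H q)).toLinearMap ∘ₗ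
      TensorProduct.map (HH.ε.toLinearMap ∘ₗ (ext.ore 1).coeff 1) ((ext.ore q).coeff 0))) E
    simp only [map_add, map_sum, LinearMap.coe_comp, Function.comp_apply,
      TensorProduct.map_tmul, LinearEquiv.coe_coe, TensorProduct.lid_tmul,
      OreData.coeff_one_ι, map_zero, zero_smul, Finset.sum_const_zero,
      OreData.coeff_one_y, map_one, one_smul, OreData.coeff_zero_one,
      ← map_mul, OreData.coeff_zero_ι, OreData.coeff_zero_ι_mul_y,
      smul_zero, zero_add, add_zero, AlgHom.toLinearMap_apply] at E2
    exact E2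
  have h4 : lcast k (inv_inv q) (HH.S q⁻¹ (r2 q⁻¹)) * r2 q = 1 := by
    have E := ext.RR.antipode_4 1 q ((ext.ore ((1 * q⁻¹) * q)).y)
    obtain ⟨T, hT⟩ := TensorProduct.exists_finset (HH.Δ 1 q⁻¹ (r1 (1 * q⁻¹)))
    rw [hy] at E
    simp only [map_add, TensorProduct.map_tmul, AlgHom.toLinearMap_apply,
      LinearMap.id_coe, id_eq, ext.compat_Δ, hy, hT, TensorProduct.tmul_sum,
      TensorProduct.tmul_add, TensorProduct.add_tmul,
      TensorProduct.sum_tmul, map_sum, TensorProduct.assoc_tmul,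
      LinearMap.coe_comp, Function.comp_apply, ext.compat_S,
      lcast_ore_ι ext.ore, lcast_ore_y ext.ore, LinearMap.mul'_apply] at E
    have E2 := congrArg (⇑((TensorProduct.lid k (H q)).toLinearMap ∘ₗ
      TensorProduct.map (HH.ε.toLinearMap ∘ₗ (ext.ore 1).coeff 1) ((ext.ore q).coeff 0))) E
    simp only [map_add, map_sum, LinearMap.coe_comp, Function.comp_apply,
      TensorProduct.map_tmul, LinearEquiv.coe_coe, TensorProduct.lid_tmul,
      OreData.coeff_one_ι, map_zero, zero_smul, Finset.sum_const_zero,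
      OreData.coeff_one_y, map_one, one_smul, OreData.coeff_zero_one,
      ← map_mul, OreData.coeff_zero_ι, OreData.coeff_zero_ι_mul_y,
      smul_zero, zero_add, add_zero, AlgHom.toLinearMap_apply] at E2
    exact E2
  exact ⟨h1, h2, h3, h4,
    ⟨⟨r1 q, lcast k (inv_inv q) (HH.S q⁻¹ (r1 q⁻¹)), h2, h1⟩, rfl⟩,
    ⟨⟨r2 q, lcast k (inv_inv q) (HH.S q⁻¹ (r2 q⁻¹)), h3, h4⟩, rfl⟩⟩
end

section
/- Let H = (H_p)_{p in G} be a G-cograded Hopf coquasigroup and τ = (τ_p : H_p → H_p)_{p in G} a family of algebra endomorphisms satisfying Δ_{p,q}(τ_{pq}(h)) = τ_p(h_(1,p)) ⊗ h_(2,q) for all p,q in G and h in H_{pq}. Define χ : H_1 → k by χ(h) = ε(τ_1(h)). Then χ is a k-algebra homomorphism and τ_p(h) = χ(h_(1,1))h_(2,p) for every p in G and h in H_p, where Δ_{1,p}(h) = h_(1,1) ⊗ h_(2,p). -/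
open scoped TensorProduct

/-- Let `τ = (τ_p)` be algebra endomorphisms of a `G`-cograded Hopf
coquasigroup with `Δ_{p,q}(τ_{pq}(h)) = τ_p(h_(1,p)) ⊗ h_(2,q)`. Then
`χ := ε ∘ τ_1 : H_1 → k` is a `k`-algebra homomorphism and
`τ_p(h) = χ(h_(1,1))h_(2,p)` for all `p` and `h ∈ H_p`. -/
theorem statement6 (k : Type*) [Field k] {G : Type*} [Group G]
    (H : G → Type*) [∀ p, Ring (H p)] [∀ p, Algebra k (H p)]
    (W : GCHCQG k H)
    (τ : ∀ p : G, H p →ₐ[k] H p)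
    (hΔτ : ∀ (p q : G) (h : H (p * q)),
      W.Δ p q (τ (p * q) h)
        = TensorProduct.map (τ p).toLinearMap LinearMap.id (W.Δ p q h)) :
    (∀ a b : H (1 : G), W.ε (τ 1 (a * b)) = W.ε (τ 1 a) * W.ε (τ 1 b)) ∧
    (W.ε (τ 1 (1 : H (1 : G))) = 1) ∧
    (∀ a b : H (1 : G), W.ε (τ 1 (a + b)) = W.ε (τ 1 a) + W.ε (τ 1 b)) ∧
    (∀ (p : G) (h : H p),
      τ p h
        = TensorProduct.lid k (H p)
            (TensorProduct.map (W.ε.comp (τ 1)).toLinearMap LinearMap.id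
              (W.Δ 1 p (lcast k (one_mul p).symm h)))) := by
  have tau_cast : ∀ {p q : G} (e : p = q) (x : H p),
      lcast k e (τ p x) = τ q (lcast k e x) := by
    intro p q e x; subst e; rfl
  have lcast_lcast : ∀ {p q : G} (e : p = q) (x : H q),
      lcast k e (lcast k e.symm x) = x := by
    intro p q e x; subst e; rfl
  refine ⟨fun a b => by simp [map_mul], by simp, fun a b => by simp [map_add], ?_⟩
  intro p h
  have comp_eq : TensorProduct.map (W.ε.comp (τ 1)).toLinearMap
        (LinearMap.id : H p →ₗ[k] H p)
      = (TensorProduct.map W.ε.toLinearMap LinearMap.id).comp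
          (TensorProduct.map (τ 1).toLinearMap LinearMap.id) := by
    rw [← TensorProduct.map_comp]; rfl
  rw [comp_eq]
  simp only [LinearMap.comp_apply]
  rw [← hΔτ 1 p (lcast k (one_mul p).symm h)]
  rw [W.counit_left p (τ (1 * p) (lcast k (one_mul p).symm h))]
  rw [tau_cast (one_mul p), lcast_lcast (one_mul p)]
end

section
/- Let H = (H_p)_{p in G} be a G-cograded Hopf coquasigroup, τ = (τ_p : H_p → H_p) a family of algebra endomorphisms, and r_p in H_p a family of invertible elements, such that for all p,q in G and h in H_{pq}: Δ_{p,q}(τ_{pq}(h)) = τ_p(h_(1,p)) ⊗ h_(2,q) and Δ_{p,q}(τ_{pq}(h)) = r_p h_(1,p) r_p⁻¹ ⊗ τ_q(h_(2,q)). Define χ : H_1 → k by χ(h) = ε(τ_1(h)). Then for all p,q in G and h in H_{pq}: χ(h_(1,1))h_(21,p) ⊗ h_(22,q) = r_p h_(1,p) r_p⁻¹ χ(h_(21,1)) ⊗ h_(22,q) = χ(h_(11,1))h_(12,p) ⊗ h_(2,q), where h_(1,1) ⊗ h_(21,p) ⊗ h_(22,q) = (id ⊗ Δ_{p,q})Δ_{1,pq}(h),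 h_(1,p) ⊗ h_(21,1) ⊗ h_(22,q) = (id ⊗ Δ_{1,q})Δ_{p,q}(h), and h_(11,1) ⊗ h_(12,p) ⊗ h_(2,q) = (Δ_{1,p} ⊗ id)Δ_{p,q}(h). -/
open scoped TensorProduct

lemma lid_naturality (k : Type*) [Field k] {M N : Type*}
    [AddCommMonoid M] [Module k M] [AddCommMonoid N] [Module k N]
    (f : M →ₗ[k] N) (x : k ⊗[k] M) :
    f (TensorProduct.lid k M x) = TensorProduct.lid k N (TensorProduct.map LinearMap.id f x) := by
  induction x using TensorProduct.induction_on with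
  | zero => simp
  | tmul a m => simp
  | add x y hx hy => simp [map_add, hx, hy]

lemma lcast_lcast (k : Type*) [Field k] {G : Type*} [Group G]
    {H : G → Type*} [∀ p, AddCommMonoid (H p)] [∀ p, Module k (H p)]
    {p q : G} (e : p = q) (h : H q) :
    lcast k e (lcast k e.symm h) = h := by subst e; rfl

lemma lcast_tau (k : Type*) [Field k] {G : Type*} [Group G]
    {H : G → Type*} [∀ p, Ring (H p)] [∀ p, Algebra k (H p)]
    (τ : ∀ p : G, H p →ₐ[k] H p) {p q : G} (e : p = q) (h : H p) :
    lcast k e (τ p h) = τ q (lcast k e h) := by subst e; rfl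

/-- With `Δ(τ_{pq}(h)) = τ_p(h_(1,p)) ⊗ h_(2,q)` and
`Δ(τ_{pq}(h)) = r_p h_(1,p) r_p⁻¹ ⊗ τ_q(h_(2,q))`, and `χ := ε ∘ τ_1`, one has
`χ(h_(1,1))h_(21,p) ⊗ h_(22,q) = r_p h_(1,p) r_p⁻¹ χ(h_(21,1)) ⊗ h_(22,q)
 = χ(h_(11,1))h_(12,p) ⊗ h_(2,q)`. -/
theorem statement7 (k : Type*) [Field k] {G : Type*} [Group G]
    (H : G → Type*) [∀ p, Ring (H p)] [∀ p, Algebra k (H p)]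
    (W : GCHCQG k H)
    (τ : ∀ p : G, H p →ₐ[k] H p)
    (r : ∀ p : G, (H p)ˣ)
    (hΔτ₁ : ∀ (p q : G) (h : H (p * q)),
      W.Δ p q (τ (p * q) h)
        = TensorProduct.map (τ p).toLinearMap LinearMap.id (W.Δ p q h))
    (hΔτ₂ : ∀ (p q : G) (h : H (p * q)),
      W.Δ p q (τ (p * q) h)
        = TensorProduct.map
            ((LinearMap.mulLeft k ((r p : H p))).comp
              (LinearMap.mulRight k (((r p)⁻¹ : (H p)ˣ) : H p)))
            (τ q).toLinearMap (W.Δ p q h)) :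
    ∀ (p q : G) (h : H (p * q)),
      (TensorProduct.lid k (H p ⊗[k] H q)
          (TensorProduct.map (W.ε.comp (τ 1)).toLinearMap (W.Δ p q).toLinearMap
            (W.Δ 1 (p * q) (lcast k (one_mul (p * q)).symm h)))
        = TensorProduct.map
            ((LinearMap.mulLeft k ((r p : H p))).comp
              (LinearMap.mulRight k (((r p)⁻¹ : (H p)ˣ) : H p)))
            ((TensorProduct.lid k (H q)).toLinearMap ∘ₗ
              TensorProduct.map (W.ε.comp (τ 1)).toLinearMap LinearMap.id ∘ₗ
              (W.Δ 1 q).toLinearMap ∘ₗ lcast k (one_mul q).symm)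
            (W.Δ p q h)) ∧
      (TensorProduct.map
            ((LinearMap.mulLeft k ((r p : H p))).comp
              (LinearMap.mulRight k (((r p)⁻¹ : (H p)ˣ) : H p)))
            ((TensorProduct.lid k (H q)).toLinearMap ∘ₗ
              TensorProduct.map (W.ε.comp (τ 1)).toLinearMap LinearMap.id ∘ₗ
              (W.Δ 1 q).toLinearMap ∘ₗ lcast k (one_mul q).symm)
            (W.Δ p q h)
        = TensorProduct.map
            ((TensorProduct.lid k (H p)).toLinearMap ∘ₗ
              TensorProduct.map (W.ε.comp (τ 1)).toLinearMap LinearMap.id ∘ₗ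
              (W.Δ 1 p).toLinearMap ∘ₗ lcast k (one_mul p).symm)
            LinearMap.id (W.Δ p q h)) := by
  -- Key: `(χ ⊗ id) ∘ Δ_{1,q}` is `τ_q`.
  have key : ∀ (q : G) (h : H q),
      (TensorProduct.lid k (H q))
        (TensorProduct.map (W.ε.comp (τ 1)).toLinearMap LinearMap.id
          (W.Δ 1 q (lcast k (one_mul q).symm h))) = τ q h := by
    intro q h
    have hcomp : TensorProduct.map (W.ε.comp (τ 1)).toLinearMap
        (LinearMap.id : H q →ₗ[k] H q)
        = (TensorProduct.map W.ε.toLinearMap LinearMap.id).comp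
            (TensorProduct.map (τ 1).toLinearMap LinearMap.id) := by
      rw [← TensorProduct.map_comp]; rfl
    have A := hΔτ₁ 1 q (lcast k (one_mul q).symm h)
    have B := W.counit_left q (τ (1 * q) (lcast k (one_mul q).symm h))
    rw [hcomp, LinearMap.comp_apply, ← A, B, lcast_tau k τ (one_mul q),
      lcast_lcast]
  have keyL : ∀ q : G,
      ((TensorProduct.lid k (H q)).toLinearMap ∘ₗ
        TensorProduct.map (W.ε.comp (τ 1)).toLinearMap LinearMap.id ∘ₗ
        (W.Δ 1 q).toLinearMap ∘ₗ lcast k (one_mul q).symm)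
      = (τ q).toLinearMap := fun q => LinearMap.ext fun h => key q h
  intro p q h
  -- LHS rewrites to `Δ p q (τ (p*q) h)`.
  have hdec : TensorProduct.map (W.ε.comp (τ 1)).toLinearMap (W.Δ p q).toLinearMap
      = (TensorProduct.map LinearMap.id (W.Δ p q).toLinearMap).comp
          (TensorProduct.map (W.ε.comp (τ 1)).toLinearMap LinearMap.id) := by
    rw [← TensorProduct.map_comp]; simp
  have step1 : TensorProduct.lid k (H p ⊗[k] H q)
      (TensorProduct.map (W.ε.comp (τ 1)).toLinearMap (W.Δ p q).toLinearMap
        (W.Δ 1 (p * q) (lcast k (one_mul (p * q)).symm h)))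
      = W.Δ p q (τ (p * q) h) := by
    rw [hdec, LinearMap.comp_apply, ← lid_naturality, key (p * q) h]; rfl
  refine ⟨?_, ?_⟩
  · rw [step1, keyL q, hΔτ₂ p q h]
  · rw [keyL q, keyL p, ← hΔτ₂ p q h, hΔτ₁ p q h]
end

section
/- Let H = (H_p)_{p in G} be a G-cograded Hopf coquasigroup, τ_p : H_p → H_p algebra endomorphisms, δ_p : H_p → H_p τ_p-derivations, and r_p in H_p invertible elements, satisfying for all p,q in G and h in H_{pq}: Δ_{p,q}(τ_{pq}(h)) = τ_p(h_(1,p)) ⊗ h_(2,q), Δ_{p,q}(τ_{pq}(h)) = r_p h_(1,p) r_p⁻¹ ⊗ τ_q(h_(2,q)), and Δ_{p,q}(δ_{pq}(h)) = δ_p(h_(1,p)) ⊗ h_(2,q) + r_p h_(1,p) ⊗ δ_q(h_(2,q)). Let R_p be k-algebras containing H_p as subalgebras and let y_p be elements of R_p with y_p a = τ_p(a)y_p + δ_p(a) for all a in H_p. Then in R_p ⊗ R_q, for all h in H_{pq}: (y_p ⊗ 1_q + r_p ⊗ y_q)·Δ_{p,q}(h) = Δ_{p,q}(τ_{pq}(h))·(y_p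 ⊗ 1_q + r_p ⊗ y_q) + Δ_{p,q}(δ_{pq}(h)). -/
open scoped TensorProduct

/-- Under conditions (F1), (F2), (D3), if `R_p` are algebras containing
`H_p` (via `ι_p`) with elements `y_p` satisfying `y_p a = τ_p(a)y_p + δ_p(a)`, then in
`R_p ⊗ R_q`:
`(y_p ⊗ 1 + r_p ⊗ y_q)·Δ_{p,q}(h) = Δ_{p,q}(τ_{pq}(h))·(y_p ⊗ 1 + r_p ⊗ y_q) + Δ_{p,q}(δ_{pq}(h))`. -/
theorem statement9 (k : Type*) [Field k] {G : Type*} [Group G]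
    (H : G → Type*) [∀ p, Ring (H p)] [∀ p, Algebra k (H p)]
    (W : GCHCQG k H)
    (τ : ∀ p : G, H p →ₐ[k] H p)
    (δ : ∀ p : G, H p →ₗ[k] H p)
    (hder : ∀ (p : G) (a b : H p), δ p (a * b) = δ p a * b + τ p a * δ p b)
    (r : ∀ p : G, (H p)ˣ)
    (hF1 : ∀ (p q : G) (h : H (p * q)),
      W.Δ p q (τ (p * q) h)
        = TensorProduct.map (τ p).toLinearMap LinearMap.id (W.Δ p q h))
    (hF2 : ∀ (p q : G) (h : H (p * q)),
      W.Δ p q (τ (p * q) h)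
        = TensorProduct.map
            ((LinearMap.mulLeft k ((r p : H p))).comp
              (LinearMap.mulRight k (((r p)⁻¹ : (H p)ˣ) : H p)))
            (τ q).toLinearMap (W.Δ p q h))
    (hD3 : ∀ (p q : G) (h : H (p * q)),
      W.Δ p q (δ (p * q) h)
        = TensorProduct.map (δ p) LinearMap.id (W.Δ p q h)
          + TensorProduct.map (LinearMap.mulLeft k ((r p : H p))) (δ q) (W.Δ p q h))
    (R : G → Type*) [∀ p, Ring (R p)] [∀ p, Algebra k (R p)]
    (ι : ∀ p : G, H p →ₐ[k] R p)
    (hinj : ∀ p : G, Function.Injective (ι p))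
    (y : ∀ p : G, R p)
    (hrel : ∀ (p : G) (a : H p), y p * ι p a = ι p (τ p a) * y p + ι p (δ p a)) :
    ∀ (p q : G) (h : H (p * q)),
      (y p ⊗ₜ[k] (1 : R q) + ι p ((r p : H p)) ⊗ₜ[k] y q)
          * TensorProduct.map (ι p).toLinearMap (ι q).toLinearMap (W.Δ p q h)
        = TensorProduct.map (ι p).toLinearMap (ι q).toLinearMap
              (W.Δ p q (τ (p * q) h))
            * (y p ⊗ₜ[k] (1 : R q) + ι p ((r p : H p)) ⊗ₜ[k] y q)
          + TensorProduct.map (ι p).toLinearMap (ι q).toLinearMap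
              (W.Δ p q (δ (p * q) h)) := by
  intro p q h
  set F := TensorProduct.map (ι p).toLinearMap (ι q).toLinearMap with hF
  have key : ∀ x : H p ⊗[k] H q,
      (y p ⊗ₜ[k] (1 : R q) + ι p ((r p : H p)) ⊗ₜ[k] y q) * F x
        = F (TensorProduct.map (τ p).toLinearMap LinearMap.id x) * (y p ⊗ₜ[k] (1 : R q))
          + F (TensorProduct.map
              ((LinearMap.mulLeft k ((r p : H p))).comp
                (LinearMap.mulRight k (((r p)⁻¹ : (H p)ˣ) : H p)))
              (τ q).toLinearMap x) * (ι p ((r p : H p)) ⊗ₜ[k] y q)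
          + F (TensorProduct.map (δ p) LinearMap.id x)
          + F (TensorProduct.map (LinearMap.mulLeft k ((r p : H p))) (δ q) x) := by
    intro x
    induction x using TensorProduct.induction_on with
    | zero => simp
    | tmul a b =>
      simp only [TensorProduct.map_tmul, hF, LinearMap.coe_comp, Function.comp_apply,
        LinearMap.mulLeft_apply, LinearMap.mulRight_apply, LinearMap.id_coe, id_eq,
        AlgHom.toLinearMap_apply]
      rw [add_mul, Algebra.TensorProduct.tmul_mul_tmul, Algebra.TensorProduct.tmul_mul_tmul,
        Algebra.TensorProduct.tmul_mul_tmul, Algebra.TensorProduct.tmul_mul_tmul,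
        hrel, hrel, one_mul, mul_one]
      rw [TensorProduct.add_tmul, TensorProduct.tmul_add]
      have hru : ι p ((r p : H p) * (a * (((r p)⁻¹ : (H p)ˣ) : H p))) * ι p ((r p : H p))
          = ι p ((r p : H p) * a) := by
        rw [← map_mul, mul_assoc, mul_assoc, Units.inv_mul, mul_one]
      rw [hru, map_mul]
      abel
    | add u v hu hv =>
      simp only [map_add, add_mul, mul_add] at *
      rw [hu, hv]; abel
  rw [mul_add]
  nth_rewrite 1 [hF1]
  nth_rewrite 1 [hF2]
  rw [hD3, key (W.Δ p q h)]
  simp only [map_add]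
  abel
end

section
/- Let H = (H_p)_{p in G} be a G-cograded Hopf coquasigroup, χ : H_1 → k a k-algebra homomorphism, and r_p in H_p a family of invertible elements with S_{p⁻¹}(r_{p⁻¹}) = r_p⁻¹ for all p. Define τ_p : H_p → H_p by τ_p(h) = χ(h_(1,1))h_(2,p). Assume that for all p,q in G and h in H_{pq}: χ(h_(1,1))h_(21,p) ⊗ h_(22,q) = r_p h_(1,p) r_p⁻¹ χ(h_(21,1)) ⊗ h_(22,q) = χ(h_(11,1))h_(12,p) ⊗ h_(2,q), and that the antipode is anti-comultiplicative: Δ_{p,q}(S_{(pq)⁻¹}(h)) = S_{p⁻¹}(h_(2,p⁻¹)) ⊗ S_{q⁻¹}(h_(1,q⁻¹)) for all h in H_{(pq)⁻¹}, where Δ_{q⁻¹,p⁻¹}(h) = h_(1,q⁻¹) ⊗ h_(2,p⁻¹). Then for every p in G and h in H_p: τ_{p⁻¹}(S_p(τ_p(h))) = r_{p⁻¹} S_p(h) r_{p⁻¹}⁻¹; equivalently, S_p(h)·r_{p⁻¹}⁻¹ = r_{p⁻¹}⁻¹·τ_{p⁻¹}(S_p(τ_p(h))). -/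
open scoped TensorProduct

section Helpers

variable {k : Type*} [Field k] {G : Type*} [Group G] {H : G → Type*}

section ModuleLevel
variable [∀ p, AddCommMonoid (H p)] [∀ p, Module k (H p)]

lemma lcast_rfl_apply {a : G} (e : a = a) (x : H a) : lcast k e x = x := rfl

lemma lcast_rfl_s12 {a : G} (e : a = a) : (lcast k e : H a →ₗ[k] H a) = LinearMap.id :=
  LinearMap.ext fun _ => rfl

lemma lcast_lcast_s12 {a b c : G} (e1 : a = b) (e2 : b = c) (x : H a) :
    lcast k e2 (lcast k e1 x) = lcast k (e1.trans e2) x := by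
  subst e1; subst e2; rfl

end ModuleLevel

section RingLevel
variable [∀ p, Ring (H p)] [∀ p, Algebra k (H p)]

lemma lcast_mul {a b : G} (e : a = b) (x y : H a) :
    lcast k e (x * y) = lcast k e x * lcast k e y := by subst e; rfl

lemma lcast_one {a b : G} (e : a = b) : lcast k e (1 : H a) = 1 := by subst e; rfl

variable (W : GCHCQG k H)

lemma S_lcast {a b : G} (e : a = b) (x : H a) :
    W.S b (lcast k e x) = lcast k (congrArg Inv.inv e) (W.S a x) := by
  subst e; rfl

lemma Δ_lcast {p p' q q' : G} (ep : p = p') (eq' : q = q') (e : p * q = p' * q')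
    (x : H (p * q)) :
    W.Δ p' q' (lcast k e x)
      = TensorProduct.map (lcast k ep) (lcast k eq') (W.Δ p q x) := by
  subst ep; subst eq'
  rw [lcast_rfl_apply, lcast_rfl_s12, lcast_rfl_s12, TensorProduct.map_id]
  rfl

lemma Δ_lcast_right {p q q' : G} (eq' : q = q') (e : p * q = p * q')
    (x : H (p * q)) :
    W.Δ p q' (lcast k e x)
      = TensorProduct.map LinearMap.id (lcast k eq') (W.Δ p q x) := by
  rw [Δ_lcast W rfl eq' e x, lcast_rfl_s12]

end RingLevel

section TensorHelpers
variable {M N M' N' : Type*} [AddCommMonoid M] [AddCommMonoid N] [AddCommMonoid M']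
  [AddCommMonoid N'] [Module k M] [Module k N] [Module k M'] [Module k N']

lemma comm_map (f : M →ₗ[k] M') (g : N →ₗ[k] N') (u : M ⊗[k] N) :
    TensorProduct.comm k M' N' (TensorProduct.map f g u)
      = TensorProduct.map g f (TensorProduct.comm k M N u) := by
  induction u with
  | zero => simp
  | tmul a b => simp
  | add x y hx hy => simp [map_add, hx, hy]

lemma map_map (f : M →ₗ[k] M') (g : N →ₗ[k] N') {M'' N'' : Type*}
    [AddCommMonoid M''] [AddCommMonoid N''] [Module k M''] [Module k N'']
    (f' : M' →ₗ[k] M'') (g' : N' →ₗ[k] N'') (u : M ⊗[k] N) :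
    TensorProduct.map f' g' (TensorProduct.map f g u)
      = TensorProduct.map (f'.comp f) (g'.comp g) u := by
  rw [TensorProduct.map_comp]; rfl

/-- pull a linear map out of the second leg through `lid ∘ (χ ⊗ id)`. -/
lemma lid_map_snd (χ : M →ₗ[k] k) (f : N →ₗ[k] N') (u : M ⊗[k] N) :
    TensorProduct.lid k N' (TensorProduct.map χ f u)
      = f (TensorProduct.lid k N (TensorProduct.map χ LinearMap.id u)) := by
  induction u with
  | zero => simp
  | tmul a b => simp
  | add x y hx hy => simp [map_add, hx, hy]

end TensorHelpers

end Helpers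

/-- relation (3.19): Under (D2) and anti-comultiplicativity of the
antipode, with `τ_p(h) = χ(h_(1,1))h_(2,p)` and `S_{p⁻¹}(r_{p⁻¹}) = r_p⁻¹`, one has
`τ_{p⁻¹}(S_p(τ_p(h))) = r_{p⁻¹} S_p(h) r_{p⁻¹}⁻¹`, equivalently
`S_p(h) r_{p⁻¹}⁻¹ = r_{p⁻¹}⁻¹ τ_{p⁻¹}(S_p(τ_p(h)))`. -/
theorem statement12 (k : Type*) [Field k] {G : Type*} [Group G]
    (H : G → Type*) [∀ p, Ring (H p)] [∀ p, Algebra k (H p)]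
    (W : GCHCQG k H)
    (χ : H (1 : G) →ₐ[k] k)
    (r : ∀ p : G, (H p)ˣ)
    (hSr : ∀ p : G,
      lcast k (inv_inv p) (W.S p⁻¹ ((r p⁻¹ : H p⁻¹))) = (((r p)⁻¹ : (H p)ˣ) : H p))
    (τ : ∀ p : G, H p →ₗ[k] H p)
    (hτ : ∀ (p : G) (h : H p),
      τ p h
        = TensorProduct.lid k (H p)
            (TensorProduct.map χ.toLinearMap LinearMap.id
              (W.Δ 1 p (lcast k (one_mul p).symm h))))
    (hD2 : ∀ (p q : G) (h : H (p * q)),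
      (TensorProduct.lid k (H p ⊗[k] H q)
          (TensorProduct.map χ.toLinearMap (W.Δ p q).toLinearMap
            (W.Δ 1 (p * q) (lcast k (one_mul (p * q)).symm h)))
        = TensorProduct.map
            ((LinearMap.mulLeft k ((r p : H p))).comp
              (LinearMap.mulRight k (((r p)⁻¹ : (H p)ˣ) : H p)))
            ((TensorProduct.lid k (H q)).toLinearMap ∘ₗ
              TensorProduct.map χ.toLinearMap LinearMap.id ∘ₗ
              (W.Δ 1 q).toLinearMap ∘ₗ lcast k (one_mul q).symm)
            (W.Δ p q h)) ∧
      (TensorProduct.map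
            ((LinearMap.mulLeft k ((r p : H p))).comp
              (LinearMap.mulRight k (((r p)⁻¹ : (H p)ˣ) : H p)))
            ((TensorProduct.lid k (H q)).toLinearMap ∘ₗ
              TensorProduct.map χ.toLinearMap LinearMap.id ∘ₗ
              (W.Δ 1 q).toLinearMap ∘ₗ lcast k (one_mul q).symm)
            (W.Δ p q h)
        = TensorProduct.map
            ((TensorProduct.lid k (H p)).toLinearMap ∘ₗ
              TensorProduct.map χ.toLinearMap LinearMap.id ∘ₗ
              (W.Δ 1 p).toLinearMap ∘ₗ lcast k (one_mul p).symm)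
            LinearMap.id (W.Δ p q h)))
    (hS : ∀ (p q : G) (h : H ((p * q)⁻¹)),
      W.Δ p q (lcast k (inv_inv (p * q)) (W.S (p * q)⁻¹ h))
        = TensorProduct.map
            ((lcast k (inv_inv p)).comp (W.S p⁻¹))
            ((lcast k (inv_inv q)).comp (W.S q⁻¹))
            (TensorProduct.comm k (H q⁻¹) (H p⁻¹)
              (W.Δ q⁻¹ p⁻¹ (lcast k (mul_inv_rev p q) h)))) :
    ∀ (p : G) (h : H p),
      (τ p⁻¹ (W.S p (τ p h))
        = (r p⁻¹ : H p⁻¹) * W.S p h * (((r p⁻¹)⁻¹ : (H p⁻¹)ˣ) : H p⁻¹)) ∧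
      (W.S p h * (((r p⁻¹)⁻¹ : (H p⁻¹)ˣ) : H p⁻¹)
        = (((r p⁻¹)⁻¹ : (H p⁻¹)ˣ) : H p⁻¹) * τ p⁻¹ (W.S p (τ p h))) := by
  intro p h
  -- transport of the units along index equalities
  have hru : ∀ {a b : G} (e : a = b), lcast k e ((r a : H a)) = ((r b : H b)) := by
    intro a b e; subst e; rfl
  -- `S p (r p) = (r p⁻¹)⁻¹`
  have hSrp : ∀ q : G, W.S q ((r q : H q)) = (((r q⁻¹)⁻¹ : (H q⁻¹)ˣ) : H q⁻¹) := by
    intro q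
    have h0 := hSr q⁻¹
    rw [← hru ((inv_inv q).symm), S_lcast, lcast_lcast_s12, lcast_rfl_apply] at h0
    exact h0
  -- `S p (r p)⁻¹ = r p⁻¹`
  have hSrp' : ∀ q : G, W.S q ((((r q)⁻¹ : (H q)ˣ) : H q)) = ((r q⁻¹ : H q⁻¹)) := by
    intro q
    have e1 : W.S q ((r q : H q)) * W.S q ((((r q)⁻¹ : (H q)ˣ) : H q)) = 1 := by
      rw [← W.S_mul, Units.inv_mul, W.S_one]
    calc W.S q ((((r q)⁻¹ : (H q)ˣ) : H q))
        = ((r q⁻¹ : H q⁻¹)) * (((r q⁻¹)⁻¹ : (H q⁻¹)ˣ) : H q⁻¹)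
            * W.S q ((((r q)⁻¹ : (H q)ˣ) : H q)) := by rw [Units.mul_inv, one_mul]
      _ = ((r q⁻¹ : H q⁻¹)) * (W.S q ((r q : H q))
            * W.S q ((((r q)⁻¹ : (H q)ˣ) : H q))) := by rw [mul_assoc, hSrp]
      _ = ((r q⁻¹ : H q⁻¹)) := by rw [e1, mul_one]
  -- Lemma B : `χ ∘ S₁ ∘ τ₁ = ε`
  have hB : ∀ x : H (1:G), χ (lcast k inv_one (W.S 1 (τ 1 x))) = W.ε x := by
    intro x
    -- swap lemma
    have hswap : ∀ u : H (1:G) ⊗[k] H 1,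
        χ (lcast k inv_one (W.S 1 (TensorProduct.lid k (H (1:G))
            (TensorProduct.map χ.toLinearMap LinearMap.id u))))
          = χ (LinearMap.mul' k (H (1:G))
              (TensorProduct.map LinearMap.id ((lcast k inv_one).comp (W.S 1)) u)) := by
      intro u
      induction u with
      | zero => simp only [LinearEquiv.map_zero, LinearMap.map_zero]
      | tmul c d =>
          simp only [TensorProduct.map_tmul, LinearMap.id_coe, id_eq,
            AlgHom.toLinearMap_apply, TensorProduct.lid_tmul, map_smul,
            LinearMap.mul'_apply, LinearMap.coe_comp, Function.comp_apply,
            smul_eq_mul, map_mul]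
      | add y z hy hz =>
          simp only [LinearEquiv.map_add, LinearMap.map_add, map_add, hy, hz]
    -- Lemma A : `χ(c_(1)) χ(S₁(c_(2))) = ε(c)` via the antipode axiom
    have e1 : (1:G) = 1 * (1⁻¹ * 1) := by group
    have e2 : (1:G) = 1⁻¹ * 1 := by group
    have e2' : (1:G) * 1 = 1 * (1⁻¹ * 1) := by group
    have hA2 := W.antipode_2 1 1 (lcast k e1 x)
    rw [lcast_lcast_s12, lcast_rfl_apply] at hA2
    rw [show (lcast k e1 x : H ((1:G) * (1⁻¹ * 1)))
          = lcast k e2' (lcast k (one_mul (1:G)).symm x) from (lcast_lcast_s12 _ _ _).symm,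
       Δ_lcast_right W e2 e2' _] at hA2
    have hTheta : ∀ u : H (1:G) ⊗[k] H 1,
        TensorProduct.rid k (H (1:G)) (TensorProduct.map LinearMap.id W.ε.toLinearMap
          (TensorProduct.map (LinearMap.mul' k (H (1:G))) LinearMap.id
            (TensorProduct.map
              (TensorProduct.map LinearMap.id ((lcast k (inv_inv (1:G))).comp (W.S 1⁻¹)))
              LinearMap.id
              ((TensorProduct.assoc k (H (1:G)) (H (1:G)⁻¹) (H (1:G))).symm
                (TensorProduct.map LinearMap.id (W.Δ 1⁻¹ 1).toLinearMap
                  (TensorProduct.map LinearMap.id (lcast k e2) u))))))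
          = LinearMap.mul' k (H (1:G))
              (TensorProduct.map LinearMap.id ((lcast k inv_one).comp (W.S 1)) u) := by
      have sub : ∀ (c : H (1:G)) (v : H (1:G)⁻¹ ⊗[k] H 1),
          TensorProduct.rid k (H (1:G)) (TensorProduct.map LinearMap.id W.ε.toLinearMap
            (TensorProduct.map (LinearMap.mul' k (H (1:G))) LinearMap.id
              (TensorProduct.map
                (TensorProduct.map LinearMap.id ((lcast k (inv_inv (1:G))).comp (W.S 1⁻¹)))
                LinearMap.id
                ((TensorProduct.assoc k (H (1:G)) (H (1:G)⁻¹) (H (1:G))).symm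
                  (c ⊗ₜ[k] v)))))
            = c * (lcast k (inv_inv (1:G))) (W.S 1⁻¹
                (TensorProduct.rid k (H (1:G)⁻¹)
                  (TensorProduct.map LinearMap.id W.ε.toLinearMap v))) := by
        intro c v
        induction v with
        | zero =>
            simp only [TensorProduct.tmul_zero, LinearEquiv.map_zero,
              LinearMap.map_zero, mul_zero]
        | tmul w z =>
            simp only [TensorProduct.assoc_symm_tmul, TensorProduct.map_tmul,
              LinearMap.id_coe, id_eq, LinearMap.mul'_apply, TensorProduct.rid_tmul,
              AlgHom.toLinearMap_apply, LinearMap.coe_comp, Function.comp_apply,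
              map_smul, mul_smul_comm]
        | add y z hy hz =>
            simp only [TensorProduct.tmul_add, LinearEquiv.map_add,
              LinearMap.map_add, hy, hz, mul_add]
      intro u
      induction u with
      | zero => simp only [LinearEquiv.map_zero, LinearMap.map_zero]
      | tmul c d =>
          simp only [TensorProduct.map_tmul, LinearMap.id_coe, id_eq,
            AlgHom.toLinearMap_apply]
          rw [sub c, W.counit_right 1⁻¹ (lcast k e2 d), lcast_lcast_s12, S_lcast, lcast_lcast_s12,
            LinearMap.mul'_apply]
          rfl
      | add y z hy hz =>
          simp only [LinearEquiv.map_add, LinearMap.map_add, hy, hz]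
    have hA3 := congrArg (fun z => TensorProduct.rid k (H (1:G))
        (TensorProduct.map LinearMap.id W.ε.toLinearMap z)) hA2
    rw [hTheta] at hA3
    have hRHS : TensorProduct.rid k (H (1:G))
        (TensorProduct.map LinearMap.id W.ε.toLinearMap ((1 : H (1:G)) ⊗ₜ[k] x))
          = W.ε x • 1 := by
      rw [TensorProduct.map_tmul, TensorProduct.rid_tmul]; rfl
    rw [hRHS] at hA3
    rw [hτ 1 x, hswap, hA3, map_smul, map_one, smul_eq_mul, mul_one]
  -- step 1 : Δ_{p,1}(τ_p h) = (Ad_{r_p} ⊗ τ_1)(Δ_{p,1} h)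
  have hT1 : ((TensorProduct.lid k (H (1:G))).toLinearMap ∘ₗ
      TensorProduct.map χ.toLinearMap LinearMap.id ∘ₗ (W.Δ 1 1).toLinearMap ∘ₗ
      lcast k (one_mul (1:G)).symm) = τ 1 := by
    apply LinearMap.ext; intro x
    simp only [LinearMap.coe_comp, Function.comp_apply, AlgHom.toLinearMap_apply,
      LinearEquiv.coe_coe]
    exact (hτ 1 x).symm
  have c1 := (hD2 p 1 (lcast k (mul_one p).symm h)).1
  rw [hT1] at c1
  have e4 : (1:G) * p = 1 * (p * 1) := by group
  have hL : TensorProduct.lid k (H p ⊗[k] H 1)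
      (TensorProduct.map χ.toLinearMap (W.Δ p 1).toLinearMap
        (W.Δ 1 (p*1) (lcast k (one_mul (p*1)).symm (lcast k (mul_one p).symm h))))
      = W.Δ p 1 (lcast k (mul_one p).symm (τ p h)) := by
    rw [lcast_lcast_s12,
      show lcast k (((mul_one p).symm).trans (one_mul (p*1)).symm) h
        = lcast k e4 (lcast k (one_mul p).symm h) from (lcast_lcast_s12 _ _ _).symm,
      Δ_lcast_right W (mul_one p).symm e4 _, map_map, LinearMap.comp_id,
      lid_map_snd, hτ p h]
    simp only [LinearMap.coe_comp, Function.comp_apply, AlgHom.toLinearMap_apply]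
  rw [hL] at c1
  -- step 2 : comultiplication of S (τ p h)
  have e0 : p = ((1:G) * p⁻¹)⁻¹ := by group
  have s := hS 1 p⁻¹ (lcast k e0 (τ p h))
  rw [S_lcast, lcast_lcast_s12] at s
  have e5 : p * 1 = p⁻¹⁻¹ * (1:G)⁻¹ := by group
  rw [lcast_lcast_s12,
    show lcast k (e0.trans (mul_inv_rev 1 p⁻¹)) (τ p h)
      = lcast k e5 (lcast k (mul_one p).symm (τ p h)) from (lcast_lcast_s12 _ _ _).symm,
    Δ_lcast W (inv_inv p).symm (inv_one (G := G)).symm e5 _, c1, comm_map, comm_map,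
    map_map, map_map] at s
  have hfin : ∀ u : H p ⊗[k] H 1,
      TensorProduct.lid k (H p⁻¹)
        ((TensorProduct.map
            (χ.toLinearMap ∘ₗ ((lcast k (inv_inv (1:G)) ∘ₗ W.S 1⁻¹) ∘ₗ
              lcast k (inv_one (G := G)).symm) ∘ₗ τ 1)
            (LinearMap.id ∘ₗ ((lcast k (inv_inv p⁻¹) ∘ₗ W.S p⁻¹⁻¹) ∘ₗ
              lcast k (inv_inv p).symm) ∘ₗ
              LinearMap.mulLeft k ((r p : H p)) ∘ₗ
              LinearMap.mulRight k (((r p)⁻¹ : (H p)ˣ) : H p)))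
          (TensorProduct.comm k (H p) (H 1) u))
        = W.S p (((r p)⁻¹ : (H p)ˣ) : H p)
            * W.S p (TensorProduct.rid k (H p)
                (TensorProduct.map LinearMap.id W.ε.toLinearMap u))
            * W.S p ((r p : H p)) := by
    intro u
    induction u with
    | zero =>
        simp only [LinearEquiv.map_zero, LinearMap.map_zero, mul_zero, zero_mul]
    | tmul a b =>
        simp only [TensorProduct.comm_tmul, TensorProduct.map_tmul,
          TensorProduct.lid_tmul, LinearMap.coe_comp, Function.comp_apply,
          LinearMap.id_coe, id_eq, LinearMap.mulLeft_apply, LinearMap.mulRight_apply,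
          TensorProduct.rid_tmul, AlgHom.toLinearMap_apply]
        rw [S_lcast, lcast_lcast_s12, S_lcast, lcast_lcast_s12, lcast_rfl_apply, hB,
          LinearMap.map_smul, W.S_mul, W.S_mul, mul_smul_comm, smul_mul_assoc]
    | add y z hy hz =>
        simp only [LinearEquiv.map_add, LinearMap.map_add, hy, hz, mul_add, add_mul]
  have main : τ p⁻¹ (W.S p (τ p h))
      = (r p⁻¹ : H p⁻¹) * W.S p h * (((r p⁻¹)⁻¹ : (H p⁻¹)ˣ) : H p⁻¹) := by
    rw [hτ p⁻¹ (W.S p (τ p h)), s, map_map, hfin,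
      W.counit_right p (lcast k (mul_one p).symm h), lcast_lcast_s12, lcast_rfl_apply,
      hSrp, hSrp']
  exact ⟨main, by rw [main, ← mul_assoc, ← mul_assoc, Units.inv_mul, one_mul]⟩
end

section
/- Let H = (H_p)_{p in G} and H' = (H'_p)_{p in G} be G-cograded Hopf coquasigroups, let R = (H_p[y_p; τ_p, δ_p]) be a group-cograded Hopf coquasigroup-Ore extension of H with Δ_{p,q}(y_{pq}) = y_p ⊗ 1_q + r_p ⊗ y_q for elements r_p in H_p, and let R' = (H'_p[y'_p; τ'_p, δ'_p]) be a group-cograded Hopf coquasigroup-Ore extension of H' with Δ'_{p,q}(y'_{pq}) = y'_p ⊗ 1_q + r'_p ⊗ y'_q for elements r'_p in H'_p. Suppose φ = (φ_p : H_p → H'_p)_{p in G} is an isomorphism of G-cograded Hopf coquasigroups (a family of k-algebra isomorphisms with (φ_p ⊗ φ_q)∘Δ_{p,q} = Δ'_{p,q}∘φ_{pq}, ε'∘φ_1 = ε, and S'_p∘φ_p = φ_{p⁻¹}∘S_p) such that φ_p(r_p) = r'_p and τ'_p∘φ_p = φ_p∘τ_p for all p, and suppose there exists a family of elements d_p in H'_p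 with Δ'_{p,q}(d_{pq}) = d_p ⊗ 1_q + r'_p ⊗ d_q for all p,q and δ'_p(φ_p(h)) = φ_p(δ_p(h)) + φ_p(τ_p(h))·d_p − d_p·φ_p(h) for all h in H_p. Then there exists a family of k-algebra isomorphisms φ̄_p : R_p → R'_p extending φ_p with φ̄_p(y_p) = y'_p + d_p and (φ̄_p ⊗ φ̄_q)∘Δ_{p,q} = Δ'_{p,q}∘φ̄_{pq} for all p,q in G; in particular R is isomorphic to R'. -/
open scoped TensorProduct

/-!
Algebra maps out of an Ore extension `A[y; τ, δ]` are freely determined by an algebra map `f`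
on `A` and an element `Y` with `Y f(a) = f(τ a) Y + f(δ a)`. The hypotheses on `d` say precisely
that `Y = y' + d` satisfies this relation over `φ`, and symmetrically `y - φ⁻¹(d)` over `φ⁻¹`,
which gives mutually inverse maps `R_p ⇄ R'_p`. Compatibility with the comultiplications is
checked on the generators: on `H_{pq}` it is the compatibility of `φ`, and on `y_{pq}` it holds
because `y' + d`, being a sum of `(1, r')`-skew primitive elements, is again one.
-/

section OreLift

variable {k : Type*} [Field k] {A RA T : Type*} [Ring A] [Algebra k A]
  [Ring RA] [Algebra k RA] [Ring T] [Algebra k T]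
  {τ : A →ₐ[k] A} {δ : A →ₗ[k] A}

noncomputable def evalMonomials (f : A →ₗ[k] T) (Y : T) : (ℕ →₀ A) →ₗ[k] T :=
  Finsupp.lsum k fun n => (LinearMap.mulRight k (Y ^ n)).comp f

@[simp] lemma evalMonomials_single (f : A →ₗ[k] T) (Y : T) (n : ℕ) (a : A) :
    evalMonomials f Y (Finsupp.single n a) = f a * Y ^ n := by
  simp [evalMonomials]

lemma evalMonomials_apply (f : A →ₗ[k] T) (Y : T) (g : ℕ →₀ A) :
    evalMonomials f Y g = g.sum fun n a => f a * Y ^ n :=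
  rfl

def SatisfiesOreRel (τ : A →ₐ[k] A) (δ : A →ₗ[k] A) (f : A →ₐ[k] T) (Y : T) : Prop :=
  ∀ a, Y * f a = f (τ a) * Y + f (δ a)

namespace OreData

lemma evalMonomials_bijective (o : OreData k A RA τ δ) :
    Function.Bijective (evalMonomials o.ι.toLinearMap o.y) := by
  refine ⟨(injective_iff_map_eq_zero _).2 fun g hg => o.free g ?_, fun x => ?_⟩
  · rwa [evalMonomials_apply] at hg
  · obtain ⟨g, hg⟩ := o.span x
    exact ⟨g, by rw [evalMonomials_apply, hg]; rfl⟩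

noncomputable def basisEquiv (o : OreData k A RA τ δ) : (ℕ →₀ A) ≃ₗ[k] RA :=
  LinearEquiv.ofBijective _ o.evalMonomials_bijective

@[elab_as_elim]
lemma induction_on (o : OreData k A RA τ δ) {P : RA → Prop} (x : RA) (zero : P 0)
    (add : ∀ x y, P x → P y → P (x + y)) (monomial : ∀ (n : ℕ) (a : A), P (o.ι a * o.y ^ n)) :
    P x := by
  obtain ⟨g, rfl⟩ := o.basisEquiv.surjective x
  induction g using Finsupp.induction with
  | zero => simpa using zero
  | single_add n a g _ _ ih =>
    rw [map_add]
    exact add _ _ (by simpa [basisEquiv] using monomial n a) ih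

variable (o : OreData k A RA τ δ) (f : A →ₐ[k] T) (Y : T)

noncomputable def liftLinear : RA →ₗ[k] T :=
  evalMonomials f.toLinearMap Y ∘ₗ o.basisEquiv.symm.toLinearMap

lemma liftLinear_monomial (n : ℕ) (a : A) :
    o.liftLinear f Y (o.ι a * o.y ^ n) = f a * Y ^ n := by
  have : o.ι a * o.y ^ n = o.basisEquiv (Finsupp.single n a) := by simp [basisEquiv]
  simp [liftLinear, this]

lemma liftLinear_ι_mul (a : A) (x : RA) :
    o.liftLinear f Y (o.ι a * x) = f a * o.liftLinear f Y x := by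
  induction x using o.induction_on with
  | zero => simp
  | add x z hx hz => rw [mul_add, map_add, map_add, hx, hz, mul_add]
  | monomial n b => rw [← mul_assoc, ← map_mul, liftLinear_monomial, liftLinear_monomial,
      map_mul, mul_assoc]

variable {o f Y}

lemma liftLinear_y_mul (hrel : SatisfiesOreRel τ δ f Y) (x : RA) :
    o.liftLinear f Y (o.y * x) = Y * o.liftLinear f Y x := by
  induction x using o.induction_on with
  | zero => simp
  | add x z hx hz => rw [mul_add, map_add, map_add, hx, hz, mul_add]
  | monomial n a =>
    have hy : o.y * (o.ι a * o.y ^ n) = o.ι (τ a) * o.y ^ (n + 1) + o.ι (δ a) * o.y ^ n := by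
      rw [← mul_assoc, o.rel, add_mul, mul_assoc, ← pow_succ']
    rw [hy, map_add, liftLinear_monomial, liftLinear_monomial, liftLinear_monomial, pow_succ',
      ← mul_assoc, ← add_mul, ← hrel, mul_assoc]

lemma liftLinear_y_pow_mul (hrel : SatisfiesOreRel τ δ f Y) (m : ℕ) (x : RA) :
    o.liftLinear f Y (o.y ^ m * x) = Y ^ m * o.liftLinear f Y x := by
  induction m generalizing x with
  | zero => simp
  | succ m ih => rw [pow_succ', mul_assoc, liftLinear_y_mul hrel, ih, pow_succ', mul_assoc]

lemma liftLinear_mul (hrel : SatisfiesOreRel τ δ f Y) (x z : RA) :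
    o.liftLinear f Y (x * z) = o.liftLinear f Y x * o.liftLinear f Y z := by
  induction x using o.induction_on with
  | zero => simp
  | add x x' hx hx' => rw [add_mul, map_add, map_add, hx, hx', add_mul]
  | monomial n a => rw [mul_assoc, liftLinear_ι_mul, liftLinear_y_pow_mul hrel,
      liftLinear_monomial, mul_assoc]

variable (o) in
noncomputable def lift (hrel : SatisfiesOreRel τ δ f Y) : RA →ₐ[k] T :=
  AlgHom.ofLinearMap (o.liftLinear f Y) (by simpa using o.liftLinear_monomial f Y 0 1)
    (liftLinear_mul hrel)

@[simp] lemma lift_ι (hrel : SatisfiesOreRel τ δ f Y) (a : A) :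
    o.lift hrel (o.ι a) = f a := by
  simpa [lift] using o.liftLinear_monomial f Y 0 a

@[simp] lemma lift_y (hrel : SatisfiesOreRel τ δ f Y) : o.lift hrel o.y = Y := by
  simpa [lift] using o.liftLinear_monomial f Y 1 1

variable (o) in
lemma algHom_ext {g₁ g₂ : RA →ₐ[k] T} (hι : ∀ a, g₁ (o.ι a) = g₂ (o.ι a))
    (hy : g₁ o.y = g₂ o.y) : g₁ = g₂ := by
  ext x
  induction x using o.induction_on with
  | zero => simp
  | add x z hx hz => rw [map_add, map_add, hx, hz]
  | monomial n a => rw [map_mul, map_mul, map_pow, map_pow, hι, hy]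

end OreData

variable {A' RA' : Type*} [Ring A'] [Algebra k A'] [Ring RA'] [Algebra k RA']
  {τ' : A' →ₐ[k] A'} {δ' : A' →ₗ[k] A'}

lemma satisfiesOreRel_add_of_twist (o' : OreData k A' RA' τ' δ') (φ : A →ₐ[k] A') {d : A'}
    (hτ : ∀ a, τ' (φ a) = φ (τ a)) (hδ : ∀ a, δ' (φ a) = φ (δ a) + φ (τ a) * d - d * φ a) :
    SatisfiesOreRel τ δ (o'.ι.comp φ) (o'.y + o'.ι d) := by
  intro a
  simp only [AlgHom.comp_apply]
  rw [add_mul, o'.rel, hτ, hδ]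
  simp only [map_sub, map_add, map_mul, mul_add]
  abel

lemma τ_symm_of_twist {φ : A ≃ₐ[k] A'} (hτ : ∀ a, τ' (φ a) = φ (τ a)) (b : A') :
    τ (φ.symm b) = φ.symm (τ' b) := by
  rw [φ.eq_symm_apply, ← hτ, φ.apply_symm_apply]

lemma δ_symm_of_twist {φ : A ≃ₐ[k] A'} {d : A'} (hτ : ∀ a, τ' (φ a) = φ (τ a))
    (hδ : ∀ a, δ' (φ a) = φ (δ a) + φ (τ a) * d - d * φ a) (b : A') :
    δ (φ.symm b) = φ.symm (δ' b) + φ.symm (τ' b) * -φ.symm d - -φ.symm d * φ.symm b := by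
  obtain ⟨a, rfl⟩ := φ.surjective b
  simp only [hδ, hτ, map_sub, map_add, map_mul, φ.symm_apply_apply]
  noncomm_ring

namespace OreData

variable (o : OreData k A RA τ δ) (o' : OreData k A' RA' τ' δ') (φ : A ≃ₐ[k] A') (d : A')
  (hτ : ∀ a, τ' (φ a) = φ (τ a)) (hδ : ∀ a, δ' (φ a) = φ (δ a) + φ (τ a) * d - d * φ a)

noncomputable def equivOfTwist : RA ≃ₐ[k] RA' :=
  AlgEquiv.ofAlgHom (o.lift (satisfiesOreRel_add_of_twist o' φ hτ hδ))
    (o'.lift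
      (satisfiesOreRel_add_of_twist o φ.symm (τ_symm_of_twist hτ) (δ_symm_of_twist hτ hδ)))
    (o'.algHom_ext (by simp) (by simp))
    (o.algHom_ext (by simp) (by simp))

@[simp] lemma equivOfTwist_ι (a : A) : o.equivOfTwist o' φ d hτ hδ (o.ι a) = o'.ι (φ a) := by
  simp [equivOfTwist]

@[simp] lemma equivOfTwist_y : o.equivOfTwist o' φ d hτ hδ o.y = o'.y + o'.ι d := by
  simp [equivOfTwist]

end OreData

end OreLift

namespace GCHCQGOreExt

variable {k : Type*} [Field k] {G : Type*} [Group G]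
  {H H' R R' : G → Type*} [∀ p, Ring (H p)] [∀ p, Algebra k (H p)]
  [∀ p, Ring (H' p)] [∀ p, Algebra k (H' p)] [∀ p, Ring (R p)] [∀ p, Algebra k (R p)]
  [∀ p, Ring (R' p)] [∀ p, Algebra k (R' p)] {HH : GCHCQG k H} {HH' : GCHCQG k H'}
  {τ : ∀ p, H p →ₐ[k] H p} {δ : ∀ p, H p →ₗ[k] H p}
  {τ' : ∀ p, H' p →ₐ[k] H' p} {δ' : ∀ p, H' p →ₗ[k] H' p}

lemma Δ_y_add_ι (ext : GCHCQGOreExt k HH R τ δ) {r d : ∀ p, H p}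
    (hy : ∀ p q, ext.RR.Δ p q (ext.ore (p * q)).y
      = (ext.ore p).y ⊗ₜ[k] (1 : R q) + (ext.ore p).ι (r p) ⊗ₜ[k] (ext.ore q).y)
    (hd : ∀ p q, HH.Δ p q (d (p * q)) = d p ⊗ₜ[k] (1 : H q) + r p ⊗ₜ[k] d q) (p q : G) :
    ext.RR.Δ p q ((ext.ore (p * q)).y + (ext.ore (p * q)).ι (d (p * q)))
      = ((ext.ore p).y + (ext.ore p).ι (d p)) ⊗ₜ[k] (1 : R q)
        + (ext.ore p).ι (r p) ⊗ₜ[k] ((ext.ore q).y + (ext.ore q).ι (d q)) := by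
  rw [map_add, hy, ext.compat_Δ, hd]
  simp only [map_add, TensorProduct.map_tmul, AlgHom.toLinearMap_apply, map_one,
    TensorProduct.add_tmul, TensorProduct.tmul_add]
  abel

variable (ext : GCHCQGOreExt k HH R τ δ) (ext' : GCHCQGOreExt k HH' R' τ' δ')

lemma tensorMap_comp_Δ {φ : ∀ p, H p →ₗ[k] H' p}
    (hφΔ : ∀ p q (h : H (p * q)),
      TensorProduct.map (φ p) (φ q) (HH.Δ p q h) = HH'.Δ p q (φ (p * q) h))
    {r : ∀ p, H p} {r' d : ∀ p, H' p}
    (hy : ∀ p q, ext.RR.Δ p q (ext.ore (p * q)).y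
      = (ext.ore p).y ⊗ₜ[k] (1 : R q) + (ext.ore p).ι (r p) ⊗ₜ[k] (ext.ore q).y)
    (hy' : ∀ p q, ext'.RR.Δ p q (ext'.ore (p * q)).y
      = (ext'.ore p).y ⊗ₜ[k] (1 : R' q) + (ext'.ore p).ι (r' p) ⊗ₜ[k] (ext'.ore q).y)
    (hd : ∀ p q, HH'.Δ p q (d (p * q)) = d p ⊗ₜ[k] (1 : H' q) + r' p ⊗ₜ[k] d q)
    {F : ∀ p, R p →ₐ[k] R' p} (hFι : ∀ p h, F p ((ext.ore p).ι h) = (ext'.ore p).ι (φ p h))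
    (hFy : ∀ p, F p (ext.ore p).y = (ext'.ore p).y + (ext'.ore p).ι (d p))
    (hFr : ∀ p, F p ((ext.ore p).ι (r p)) = (ext'.ore p).ι (r' p)) (p q : G) :
    (Algebra.TensorProduct.map (F p) (F q)).comp (ext.RR.Δ p q)
      = (ext'.RR.Δ p q).comp (F (p * q)) := by
  have hFι_lin : ∀ p, (F p).toLinearMap ∘ₗ (ext.ore p).ι.toLinearMap
      = (ext'.ore p).ι.toLinearMap ∘ₗ φ p := fun p => LinearMap.ext (hFι p)
  refine (ext.ore (p * q)).algHom_ext (fun h => ?_) ?_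
  · calc Algebra.TensorProduct.map (F p) (F q) (ext.RR.Δ p q ((ext.ore (p * q)).ι h))
        = TensorProduct.map (F p).toLinearMap (F q).toLinearMap
            (TensorProduct.map (ext.ore p).ι.toLinearMap (ext.ore q).ι.toLinearMap
              (HH.Δ p q h)) := by rw [ext.compat_Δ]; rfl
      _ = TensorProduct.map (ext'.ore p).ι.toLinearMap (ext'.ore q).ι.toLinearMap
            (TensorProduct.map (φ p) (φ q) (HH.Δ p q h)) := by
          rw [TensorProduct.map_map, hFι_lin, hFι_lin, ← TensorProduct.map_map]
      _ = ext'.RR.Δ p q (F (p * q) ((ext.ore (p * q)).ι h)) := by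
          rw [hφΔ, hFι, ext'.compat_Δ]
  · simp only [AlgHom.comp_apply, hy, hFy, ext'.Δ_y_add_ι hy' hd, map_add,
      Algebra.TensorProduct.map_tmul, hFr, map_one]

end GCHCQGOreExt

theorem statement18_general (k : Type*) [Field k] {G : Type*} [Group G]
    (H : G → Type*) [∀ p, Ring (H p)] [∀ p, Algebra k (H p)]
    (H' : G → Type*) [∀ p, Ring (H' p)] [∀ p, Algebra k (H' p)]
    (HH : GCHCQG k H) (HH' : GCHCQG k H')
    (R : G → Type*) [∀ p, Ring (R p)] [∀ p, Algebra k (R p)]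
    (R' : G → Type*) [∀ p, Ring (R' p)] [∀ p, Algebra k (R' p)]
    (τ : ∀ p : G, H p →ₐ[k] H p) (δ : ∀ p : G, H p →ₗ[k] H p)
    (τ' : ∀ p : G, H' p →ₐ[k] H' p) (δ' : ∀ p : G, H' p →ₗ[k] H' p)
    (ext : GCHCQGOreExt k HH R τ δ) (ext' : GCHCQGOreExt k HH' R' τ' δ')
    (r : ∀ p : G, H p) (r' : ∀ p : G, H' p)
    (hy : ∀ p q : G,
      ext.RR.Δ p q ((ext.ore (p * q)).y)
        = (ext.ore p).y ⊗ₜ[k] (1 : R q) + (ext.ore p).ι (r p) ⊗ₜ[k] (ext.ore q).y)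
    (hy' : ∀ p q : G,
      ext'.RR.Δ p q ((ext'.ore (p * q)).y)
        = (ext'.ore p).y ⊗ₜ[k] (1 : R' q)
          + (ext'.ore p).ι (r' p) ⊗ₜ[k] (ext'.ore q).y)
    (φ : ∀ p : G, H p ≃ₐ[k] H' p)
    (hφΔ : ∀ (p q : G) (h : H (p * q)),
      TensorProduct.map (φ p).toLinearMap (φ q).toLinearMap (HH.Δ p q h)
        = HH'.Δ p q (φ (p * q) h))
    (hφr : ∀ p : G, φ p (r p) = r' p)
    (hφτ : ∀ (p : G) (h : H p), τ' p (φ p h) = φ p (τ p h))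
    (d : ∀ p : G, H' p)
    (hd : ∀ p q : G,
      HH'.Δ p q (d (p * q)) = d p ⊗ₜ[k] (1 : H' q) + r' p ⊗ₜ[k] d q)
    (hφδ : ∀ (p : G) (h : H p),
      δ' p (φ p h) = φ p (δ p h) + φ p (τ p h) * d p - d p * φ p h) :
    ∃ ψ : ∀ p : G, R p ≃ₐ[k] R' p,
      (∀ (p : G) (h : H p), ψ p ((ext.ore p).ι h) = (ext'.ore p).ι (φ p h)) ∧
      (∀ p : G, ψ p ((ext.ore p).y) = (ext'.ore p).y + (ext'.ore p).ι (d p)) ∧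
      (∀ (p q : G) (x : R (p * q)),
        TensorProduct.map (ψ p).toLinearMap (ψ q).toLinearMap (ext.RR.Δ p q x)
          = ext'.RR.Δ p q (ψ (p * q) x)) := by
  let ψ p := (ext.ore p).equivOfTwist (ext'.ore p) (φ p) (d p) (hφτ p) (hφδ p)
  have hψι (p : G) (h : H p) : ψ p ((ext.ore p).ι h) = (ext'.ore p).ι (φ p h) :=
    OreData.equivOfTwist_ι ..
  have hψy (p : G) : ψ p (ext.ore p).y = (ext'.ore p).y + (ext'.ore p).ι (d p) :=
    OreData.equivOfTwist_y ..
  refine ⟨ψ, hψι, hψy, fun p q x => ?_⟩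
  have hΔ := ext.tensorMap_comp_Δ ext' (φ := fun p => (φ p).toLinearMap) hφΔ hy hy' hd
    (F := fun p => (ψ p : R p →ₐ[k] R' p)) hψι hψy (fun p => by simp [hψι, hφr]) p q
  exact DFunLike.congr_fun hΔ x

/-- Theorem 4.7: An isomorphism `φ : H → H'` of `G`-cograded Hopf
coquasigroups with `φ_p(r_p) = r'_p`, `τ'_p ∘ φ_p = φ_p ∘ τ_p`, together with elements
`d_p ∈ H'_p` satisfying `Δ'(d_{pq}) = d_p ⊗ 1 + r'_p ⊗ d_q` and
`δ'_p(φ_p(h)) = φ_p(δ_p(h)) + φ_p(τ_p(h))d_p − d_p φ_p(h)`, extends to an isomorphism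
`φ̄ : R → R'` of the Ore extensions with `φ̄_p(y_p) = y'_p + d_p` which is compatible
with the comultiplications; in particular `R ≅ R'`. -/
theorem statement18 (k : Type*) [Field k] {G : Type*} [Group G]
    (H : G → Type*) [∀ p, Ring (H p)] [∀ p, Algebra k (H p)]
    (H' : G → Type*) [∀ p, Ring (H' p)] [∀ p, Algebra k (H' p)]
    (HH : GCHCQG k H) (HH' : GCHCQG k H')
    (R : G → Type*) [∀ p, Ring (R p)] [∀ p, Algebra k (R p)]
    (R' : G → Type*) [∀ p, Ring (R' p)] [∀ p, Algebra k (R' p)]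
    (τ : ∀ p : G, H p →ₐ[k] H p) (δ : ∀ p : G, H p →ₗ[k] H p)
    (τ' : ∀ p : G, H' p →ₐ[k] H' p) (δ' : ∀ p : G, H' p →ₗ[k] H' p)
    (ext : GCHCQGOreExt k HH R τ δ) (ext' : GCHCQGOreExt k HH' R' τ' δ')
    (r : ∀ p : G, H p) (r' : ∀ p : G, H' p)
    (hy : ∀ p q : G,
      ext.RR.Δ p q ((ext.ore (p * q)).y)
        = (ext.ore p).y ⊗ₜ[k] (1 : R q) + (ext.ore p).ι (r p) ⊗ₜ[k] (ext.ore q).y)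
    (hy' : ∀ p q : G,
      ext'.RR.Δ p q ((ext'.ore (p * q)).y)
        = (ext'.ore p).y ⊗ₜ[k] (1 : R' q)
          + (ext'.ore p).ι (r' p) ⊗ₜ[k] (ext'.ore q).y)
    (φ : ∀ p : G, H p ≃ₐ[k] H' p)
    (hφΔ : ∀ (p q : G) (h : H (p * q)),
      TensorProduct.map (φ p).toLinearMap (φ q).toLinearMap (HH.Δ p q h)
        = HH'.Δ p q (φ (p * q) h))
    (hφε : ∀ h : H (1 : G), HH'.ε (φ 1 h) = HH.ε h)
    (hφS : ∀ (p : G) (h : H p), HH'.S p (φ p h) = φ p⁻¹ (HH.S p h))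
    (hφr : ∀ p : G, φ p (r p) = r' p)
    (hφτ : ∀ (p : G) (h : H p), τ' p (φ p h) = φ p (τ p h))
    (d : ∀ p : G, H' p)
    (hd : ∀ p q : G,
      HH'.Δ p q (d (p * q)) = d p ⊗ₜ[k] (1 : H' q) + r' p ⊗ₜ[k] d q)
    (hφδ : ∀ (p : G) (h : H p),
      δ' p (φ p h) = φ p (δ p h) + φ p (τ p h) * d p - d p * φ p h) :
    ∃ ψ : ∀ p : G, R p ≃ₐ[k] R' p,
      (∀ (p : G) (h : H p), ψ p ((ext.ore p).ι h) = (ext'.ore p).ι (φ p h)) ∧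
      (∀ p : G, ψ p ((ext.ore p).y) = (ext'.ore p).y + (ext'.ore p).ι (d p)) ∧
      (∀ (p q : G) (x : R (p * q)),
        TensorProduct.map (ψ p).toLinearMap (ψ q).toLinearMap (ext.RR.Δ p q x)
          = ext'.RR.Δ p q (ψ (p * q) x)) :=
  statement18_general k H H' HH HH' R R' τ δ τ' δ' ext ext' r r' hy hy' φ hφΔ hφr hφτ d hd hφδ
end

section
/- Let H be a Hopf coquasigroup over a field k, τ an algebra endomorphism of H and δ a τ-derivation of H, and suppose the Ore extension R = H[y; τ, δ] is a Hopf coquasigroup whose comultiplication, counit and antipode restrict to those of H on the subalgebra H and whose comultiplication satisfies Δ(y) = y ⊗ 1 + r ⊗ y for an invertible element r in H. Define χ : H → k by χ(h) = ε(τ(h)). Then: (1) χ is a k-algebra homomorphism and τ(h) = χ(h_(1))h_(2) for all h in H; (2) χ(h_(1))h_(2)(1) ⊗ h_(2)(2) = r h_(1) r⁻¹ χ(h_(2)(1)) ⊗ h_(2)(2) = χ(h_(1)(1))h_(1)(2) ⊗ h_(2) for all h in H; (3) Δ(δ(h)) = δ(h_(1)) ⊗ h_(2) + r h_(1) ⊗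 δ(h_(2)) for all h in H. -/
open scoped TensorProduct

section Aux19

variable {k : Type*} [Field k] {H R : Type*} [Ring H] [Algebra k H] [Ring R] [Algebra k R]
  {τ : H →ₐ[k] H} {δ : H →ₗ[k] H}

namespace OreData

variable (od : OreData k H R τ δ)

/-- `φ n a = ι a * yⁿ`. -/
def φ (n : ℕ) : H →ₗ[k] R := (LinearMap.mulRight k (od.y ^ n)).comp od.ι.toLinearMap

@[simp] lemma φ_apply (n : ℕ) (a : H) : od.φ n a = od.ι a * od.y ^ n := rfl

/-- The evaluation map from coefficient lists to `R`. -/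
noncomputable def e : (ℕ →₀ H) →ₗ[k] R := Finsupp.lsum k od.φ

lemma e_apply (f : ℕ →₀ H) : od.e f = f.sum fun n a => od.ι a * od.y ^ n := by
  simp [e, Finsupp.lsum_apply, Finsupp.sum]

lemma e_bij : Function.Bijective od.e := by
  constructor
  · rw [injective_iff_map_eq_zero]
    intro f hf
    exact od.free f (by rw [← od.e_apply]; exact hf)
  · intro x
    obtain ⟨f, hf⟩ := od.span x
    exact ⟨f, by rw [od.e_apply, ← hf]⟩

/-- `R` is isomorphic to the space of coefficient lists. -/
noncomputable def E : (ℕ →₀ H) ≃ₗ[k] R := LinearEquiv.ofBijective od.e od.e_bij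

/-- The `n`-th coordinate function. -/
noncomputable def c (n : ℕ) : R →ₗ[k] H := (Finsupp.lapply n).comp od.E.symm.toLinearMap

lemma c_φ (n i : ℕ) (a : H) : od.c n (od.φ i a) = Finsupp.single i a n := by
  have h1 : od.E (Finsupp.single i a) = od.φ i a := by
    show od.e _ = _
    rw [od.e_apply, Finsupp.sum_single_index (by simp)]
    rfl
  rw [c, LinearMap.comp_apply, ← h1]
  simp

lemma c_φ_same (n : ℕ) : (od.c n).comp (od.φ n) = LinearMap.id := by
  ext a
  rw [LinearMap.comp_apply, c_φ]
  simp

lemma c_φ_ne {n i : ℕ} (h : i ≠ n) : (od.c n).comp (od.φ i) = 0 := by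
  ext a
  rw [LinearMap.comp_apply, c_φ]
  simp [Finsupp.single_apply, h]

/-- `μ i j (a ⊗ b) = ι a yⁱ ⊗ ι b yʲ`. -/
noncomputable def μ (i j : ℕ) : H ⊗[k] H →ₗ[k] R ⊗[k] R := TensorProduct.map (od.φ i) (od.φ j)

lemma map_c_μ (n m i j : ℕ) (X : H ⊗[k] H) :
    TensorProduct.map (od.c n) (od.c m) (od.μ i j X)
      = TensorProduct.map ((od.c n).comp (od.φ i)) ((od.c m).comp (od.φ j)) X := by
  rw [μ, TensorProduct.map_comp]; rfl

lemma map_zero_left' (g : H →ₗ[k] H) :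
    TensorProduct.map (0 : H →ₗ[k] H) g = 0 := by
  apply TensorProduct.ext'
  intro a b
  simp

lemma extract {A B C : H ⊗[k] H}
    (hEq : od.μ 1 0 A + od.μ 0 1 B + od.μ 0 0 C = 0) : A = 0 ∧ B = 0 ∧ C = 0 := by
  have t10 := congrArg (TensorProduct.map (od.c 1) (od.c 0)) hEq
  have t01 := congrArg (TensorProduct.map (od.c 0) (od.c 1)) hEq
  have t00 := congrArg (TensorProduct.map (od.c 0) (od.c 0)) hEq
  simp only [map_add, map_zero, map_c_μ, c_φ_same,
    od.c_φ_ne (by norm_num : (1:ℕ) ≠ 0), od.c_φ_ne (by norm_num : (0:ℕ) ≠ 1),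
    TensorProduct.map_id, LinearMap.id_apply] at t10 t01 t00
  refine ⟨?_, ?_, ?_⟩
  · simpa [TensorProduct.map_id] using t10
  · simpa [TensorProduct.map_id] using t01
  · simpa [TensorProduct.map_id] using t00

end OreData

end Aux19

/-- `lid` commutes with a map in the second factor. -/
lemma lid_map_snd_s19 {k : Type*} [Field k] {P Q N : Type*}
    [AddCommGroup P] [Module k P] [AddCommGroup Q] [Module k Q]
    [AddCommGroup N] [Module k N]
    (f : P →ₗ[k] k) (g : Q →ₗ[k] N) (x : P ⊗[k] Q) :
    TensorProduct.lid k N (TensorProduct.map f g x)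
      = g (TensorProduct.lid k Q (TensorProduct.map f LinearMap.id x)) := by
  induction x using TensorProduct.induction_on with
  | zero => simp
  | tmul a b => simp
  | add u v hu hv => simp only [map_add, hu, hv]

/-- Hopf coquasigroup-Ore extension, necessity: If the Ore extension
`R = H[y; τ, δ]` of a Hopf coquasigroup `H` is a Hopf coquasigroup extending `H` with
`Δ(y) = y ⊗ 1 + r ⊗ y` (`r` invertible) and `χ(h) = ε(τ(h))`, then: (1) `χ` is a
character and `τ(h) = χ(h₁)h₂`; (2) `χ(h₁)h₂₍₁₎ ⊗ h₂₍₂₎ = r h₁ r⁻¹ χ(h₂₍₁₎) ⊗ h₂₍₂₎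
 = χ(h₁₍₁₎)h₁₍₂₎ ⊗ h₂`; (3) `Δ(δ(h)) = δ(h₁) ⊗ h₂ + r h₁ ⊗ δ(h₂)`. -/
theorem statement19 (k : Type*) [Field k]
    (H : Type*) [Ring H] [Algebra k H] (HC : HopfCoquasigroup k H)
    (R : Type*) [Ring R] [Algebra k R]
    (τ : H →ₐ[k] H) (δ : H →ₗ[k] H)
    (hder : ∀ a b : H, δ (a * b) = δ a * b + τ a * δ b)
    (od : OreData k H R τ δ)
    (RC : HopfCoquasigroup k R)
    (compatΔ : ∀ h : H,
      RC.Δ (od.ι h) = TensorProduct.map od.ι.toLinearMap od.ι.toLinearMap (HC.Δ h))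
    (compatε : ∀ h : H, RC.ε (od.ι h) = HC.ε h)
    (compatS : ∀ h : H, RC.S (od.ι h) = od.ι (HC.S h))
    (r : Hˣ)
    (hy : RC.Δ od.y = od.y ⊗ₜ[k] (1 : R) + od.ι (r : H) ⊗ₜ[k] od.y) :
    -- (1) χ := ε ∘ τ is a k-algebra homomorphism and τ(h) = χ(h₁)h₂
    ((∀ a b : H, HC.ε (τ (a * b)) = HC.ε (τ a) * HC.ε (τ b)) ∧
     (HC.ε (τ (1 : H)) = 1) ∧
     (∀ h : H,
        τ h = TensorProduct.lid k H
          (TensorProduct.map (HC.ε.comp τ).toLinearMap LinearMap.id (HC.Δ h)))) ∧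
    -- (2)
    (∀ h : H,
      (TensorProduct.lid k (H ⊗[k] H)
          (TensorProduct.map (HC.ε.comp τ).toLinearMap HC.Δ.toLinearMap (HC.Δ h))
        = TensorProduct.map
            ((LinearMap.mulLeft k ((r : H))).comp
              (LinearMap.mulRight k ((r⁻¹ : Hˣ) : H)))
            ((TensorProduct.lid k H).toLinearMap ∘ₗ
              TensorProduct.map (HC.ε.comp τ).toLinearMap LinearMap.id ∘ₗ
              HC.Δ.toLinearMap)
            (HC.Δ h)) ∧
      (TensorProduct.map
            ((LinearMap.mulLeft k ((r : H))).comp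
              (LinearMap.mulRight k ((r⁻¹ : Hˣ) : H)))
            ((TensorProduct.lid k H).toLinearMap ∘ₗ
              TensorProduct.map (HC.ε.comp τ).toLinearMap LinearMap.id ∘ₗ
              HC.Δ.toLinearMap)
            (HC.Δ h)
        = TensorProduct.map
            ((TensorProduct.lid k H).toLinearMap ∘ₗ
              TensorProduct.map (HC.ε.comp τ).toLinearMap LinearMap.id ∘ₗ
              HC.Δ.toLinearMap)
            LinearMap.id (HC.Δ h))) ∧
    -- (3)
    (∀ h : H,
      HC.Δ (δ h)
        = TensorProduct.map δ LinearMap.id (HC.Δ h)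
          + TensorProduct.map (LinearMap.mulLeft k ((r : H))) δ (HC.Δ h)) := by
  classical
  -- product expansion lemmas in R ⊗ R
  have L1 : ∀ t : H ⊗[k] H,
      (od.y ⊗ₜ[k] (1:R)) * (TensorProduct.map od.ι.toLinearMap od.ι.toLinearMap t)
        = od.μ 1 0 (TensorProduct.map τ.toLinearMap LinearMap.id t)
          + od.μ 0 0 (TensorProduct.map δ LinearMap.id t) := by
    intro t
    induction t using TensorProduct.induction_on with
    | zero => simp
    | tmul a b =>
        simp only [AlgHom.toLinearMap_apply, TensorProduct.map_tmul, LinearMap.id_apply, OreData.μ,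
          Algebra.TensorProduct.tmul_mul_tmul, od.rel, OreData.φ_apply, pow_one, pow_zero,
          mul_one, one_mul, TensorProduct.add_tmul]
    | add x z hx hz =>
        simp only [map_add, mul_add, hx, hz]; abel
  have L2 : ∀ t : H ⊗[k] H,
      ((od.ι (r:H)) ⊗ₜ[k] od.y) * (TensorProduct.map od.ι.toLinearMap od.ι.toLinearMap t)
        = od.μ 0 1 (TensorProduct.map (LinearMap.mulLeft k (r:H)) τ.toLinearMap t)
          + od.μ 0 0 (TensorProduct.map (LinearMap.mulLeft k (r:H)) δ t) := by
    intro t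
    induction t using TensorProduct.induction_on with
    | zero => simp
    | tmul a b =>
        simp only [AlgHom.toLinearMap_apply, TensorProduct.map_tmul, LinearMap.mulLeft_apply, OreData.μ,
          Algebra.TensorProduct.tmul_mul_tmul, od.rel, OreData.φ_apply, pow_one, pow_zero,
          mul_one, one_mul, TensorProduct.tmul_add, map_mul]
    | add x z hx hz =>
        simp only [map_add, mul_add, hx, hz]; abel
  have L3 : ∀ u : H ⊗[k] H,
      (TensorProduct.map od.ι.toLinearMap od.ι.toLinearMap u) * (od.y ⊗ₜ[k] (1:R))
        = od.μ 1 0 u := by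
    intro u
    induction u using TensorProduct.induction_on with
    | zero => simp
    | tmul a b =>
        simp only [AlgHom.toLinearMap_apply, TensorProduct.map_tmul, OreData.μ,
          Algebra.TensorProduct.tmul_mul_tmul, OreData.φ_apply, pow_one, pow_zero, mul_one]
    | add x z hx hz =>
        simp only [map_add, add_mul, hx, hz]
  have L4 : ∀ u : H ⊗[k] H,
      (TensorProduct.map od.ι.toLinearMap od.ι.toLinearMap u) * ((od.ι (r:H)) ⊗ₜ[k] od.y)
        = od.μ 0 1 (TensorProduct.map (LinearMap.mulRight k (r:H)) LinearMap.id u) := by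
    intro u
    induction u using TensorProduct.induction_on with
    | zero => simp
    | tmul a b =>
        simp only [AlgHom.toLinearMap_apply, TensorProduct.map_tmul, LinearMap.mulRight_apply, LinearMap.id_apply,
          OreData.μ, Algebra.TensorProduct.tmul_mul_tmul, OreData.φ_apply, pow_one, pow_zero,
          mul_one, map_mul]
    | add x z hx hz =>
        simp only [map_add, add_mul, hx, hz]
  have L5 : ∀ v : H ⊗[k] H,
      TensorProduct.map od.ι.toLinearMap od.ι.toLinearMap v = od.μ 0 0 v := by
    intro v
    induction v using TensorProduct.induction_on with
    | zero => simp
    | tmul a b =>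
        simp only [AlgHom.toLinearMap_apply, TensorProduct.map_tmul, OreData.μ, OreData.φ_apply, pow_zero, mul_one]
    | add x z hx hz =>
        simp only [map_add, hx, hz]
  -- the three structure identities obtained by comparing coefficients
  have key : ∀ h : H,
      (TensorProduct.map τ.toLinearMap LinearMap.id (HC.Δ h) = HC.Δ (τ h))
      ∧ (TensorProduct.map (LinearMap.mulLeft k (r:H)) τ.toLinearMap (HC.Δ h)
          = TensorProduct.map (LinearMap.mulRight k (r:H)) LinearMap.id (HC.Δ (τ h)))
      ∧ (HC.Δ (δ h) = TensorProduct.map δ LinearMap.id (HC.Δ h)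
          + TensorProduct.map (LinearMap.mulLeft k (r:H)) δ (HC.Δ h)) := by
    intro h
    have e0 : (od.y ⊗ₜ[k] (1:R) + od.ι (r:H) ⊗ₜ[k] od.y)
          * TensorProduct.map od.ι.toLinearMap od.ι.toLinearMap (HC.Δ h)
        = TensorProduct.map od.ι.toLinearMap od.ι.toLinearMap (HC.Δ (τ h))
            * (od.y ⊗ₜ[k] (1:R) + od.ι (r:H) ⊗ₜ[k] od.y)
          + TensorProduct.map od.ι.toLinearMap od.ι.toLinearMap (HC.Δ (δ h)) := by
      rw [← hy, ← compatΔ h, ← compatΔ (τ h), ← compatΔ (δ h), ← map_mul, ← map_mul,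
        ← map_add, od.rel]
    rw [add_mul, mul_add, L1, L2, L3, L4, L5] at e0
    have hA := congrArg (TensorProduct.map (od.c 1) (od.c 0)) e0
    have hB := congrArg (TensorProduct.map (od.c 0) (od.c 1)) e0
    have hC := congrArg (TensorProduct.map (od.c 0) (od.c 0)) e0
    simp only [map_add, OreData.map_c_μ, OreData.c_φ_same,
      od.c_φ_ne (by norm_num : (1:ℕ) ≠ 0), od.c_φ_ne (by norm_num : (0:ℕ) ≠ 1),
      TensorProduct.map_id, LinearMap.id_apply] at hA hB hC
    simp at hA hB hC
    exact ⟨hA, hB, hC.symm⟩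
  -- χ ⊗ id followed by lid is τ
  have F : ∀ x : H,
      TensorProduct.lid k H
        (TensorProduct.map (HC.ε.comp τ).toLinearMap LinearMap.id (HC.Δ x)) = τ x := by
    intro x
    have h2 : TensorProduct.map (HC.ε.comp τ).toLinearMap LinearMap.id (HC.Δ x)
        = TensorProduct.map HC.ε.toLinearMap LinearMap.id
            (TensorProduct.map τ.toLinearMap LinearMap.id (HC.Δ x)) := by
      rw [← LinearMap.comp_apply, ← TensorProduct.map_comp, LinearMap.id_comp]
      rfl
    rw [h2, (key x).1, HC.counit_left]
  have gτ : ((TensorProduct.lid k H).toLinearMap ∘ₗ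
      TensorProduct.map (HC.ε.comp τ).toLinearMap LinearMap.id ∘ₗ
      HC.Δ.toLinearMap) = τ.toLinearMap := by
    ext x
    simpa using F x
  have RrInv : (LinearMap.mulRight k ((r⁻¹ : Hˣ) : H)).comp
      (LinearMap.mulRight k ((r : Hˣ) : H)) = LinearMap.id := by
    ext x
    simp [mul_assoc]
  have comm : (LinearMap.mulLeft k ((r : Hˣ) : H)).comp
        (LinearMap.mulRight k ((r⁻¹ : Hˣ) : H))
      = (LinearMap.mulRight k ((r⁻¹ : Hˣ) : H)).comp
        (LinearMap.mulLeft k ((r : Hˣ) : H)) := by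
    ext x
    simp [mul_assoc]
  have mid : ∀ h : H,
      TensorProduct.map ((LinearMap.mulLeft k ((r : Hˣ) : H)).comp
          (LinearMap.mulRight k ((r⁻¹ : Hˣ) : H))) τ.toLinearMap (HC.Δ h)
        = HC.Δ (τ h) := by
    intro h
    rw [comm]
    have step : TensorProduct.map ((LinearMap.mulRight k ((r⁻¹ : Hˣ) : H)).comp
          (LinearMap.mulLeft k ((r : Hˣ) : H))) τ.toLinearMap (HC.Δ h)
        = TensorProduct.map (LinearMap.mulRight k ((r⁻¹ : Hˣ) : H)) LinearMap.id
            (TensorProduct.map (LinearMap.mulLeft k ((r : Hˣ) : H)) τ.toLinearMap (HC.Δ h)) := by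
      rw [← LinearMap.comp_apply, ← TensorProduct.map_comp, LinearMap.id_comp]
    rw [step, (key h).2.1, ← LinearMap.comp_apply, ← TensorProduct.map_comp, RrInv,
      LinearMap.id_comp, TensorProduct.map_id, LinearMap.id_apply]
  refine ⟨⟨fun a b => by simp [map_mul], by simp, fun h => (F h).symm⟩, fun h => ⟨?_, ?_⟩,
    fun h => (key h).2.2⟩
  · rw [gτ]
    have lhs : TensorProduct.lid k (H ⊗[k] H)
        (TensorProduct.map (HC.ε.comp τ).toLinearMap HC.Δ.toLinearMap (HC.Δ h))
        = HC.Δ (τ h) := by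
      rw [lid_map_snd_s19, F h]
      rfl
    rw [lhs, mid h]
  · rw [gτ, mid h, (key h).1]
end
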